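/- arXiv:2411.08549 — 7 statements merged into one kernel-verified Lean document; each statement's English description precedes it below -/
import Mathlib

section
/- Let d ≥ 1 and s₁, …, s_d > 0. Define F : (0, ∞) → ℝ by F(D) = inf{ Σ_{i=1}^d max{ln(s_i/D_i), 0} : D₁, …, D_d > 0, Σ_i D_i = D }. Then F is a convex function of D on (0, ∞). -/
/-!
The value function is the infimal projection of the convex allocation cost
`x ↦ ∑ i, max (log (s i / x i)) 0` (convex because `log` is concave) along the linear map
`x ↦ ∑ i, x i`. Such a projection is convex: a convex combination of allocations of `D₁` and
`D₂` is an allocation of the combined total, whose cost is at most the combination of the costs.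
-/

open Real Set
open scoped Pointwise

theorem ConvexOn.sInf_image_fiber {E F : Type*} [AddCommGroup E] [Module ℝ E]
    [AddCommGroup F] [Module ℝ F] {C : Set E} {f : E → ℝ} (hf : ConvexOn ℝ C f)
    (hf_bdd : BddBelow (f '' C)) (L : E →ₗ[ℝ] F) {t : Set F} (ht : Convex ℝ t)
    (htL : t ⊆ L '' C) :
    ConvexOn ℝ t fun y => sInf (f '' {x ∈ C | L x = y}) := by
  refine ⟨ht, fun y₁ hy₁ y₂ hy₂ a b ha hb hab => ?_⟩
  have hne : ∀ y ∈ t, (f '' {x ∈ C | L x = y}).Nonempty := fun y hy =>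
    let ⟨x, hxC, hx⟩ := htL hy; ⟨f x, x, ⟨hxC, hx⟩, rfl⟩
  have hbdd : ∀ y, BddBelow (f '' {x ∈ C | L x = y}) := fun y =>
    hf_bdd.mono (image_mono (sep_subset _ _))
  beta_reduce
  rw [← Real.sInf_smul_of_nonneg ha, ← Real.sInf_smul_of_nonneg hb,
    ← csInf_add ((hne y₁ hy₁).smul_set) ((hbdd y₁).smul_of_nonneg ha)
      ((hne y₂ hy₂).smul_set) ((hbdd y₂).smul_of_nonneg hb)]
  refine le_csInf (((hne y₁ hy₁).smul_set).add (hne y₂ hy₂).smul_set) ?_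
  rintro _ ⟨_, ⟨_, ⟨x₁, ⟨hx₁C, rfl⟩, rfl⟩, rfl⟩, _, ⟨_, ⟨x₂, ⟨hx₂C, rfl⟩, rfl⟩, rfl⟩, rfl⟩
  calc sInf (f '' {x ∈ C | L x = a • L x₁ + b • L x₂})
      ≤ f (a • x₁ + b • x₂) :=
        csInf_le (hbdd _) ⟨_, ⟨hf.1 hx₁C hx₂C ha hb hab, by simp⟩, rfl⟩
    _ ≤ a • f x₁ + b • f x₂ := hf.2 hx₁C hx₂C ha hb hab

theorem ConvexOn.finset_sum {𝕜 E β ι : Type*} [Semiring 𝕜] [PartialOrder 𝕜] [AddCommMonoid E]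
    [SMul 𝕜 E] [AddCommMonoid β] [PartialOrder β] [IsOrderedAddMonoid β] [Module 𝕜 β]
    {s : Set E} {f : ι → E → β} (t : Finset ι) (hs : Convex 𝕜 s)
    (hf : ∀ i ∈ t, ConvexOn 𝕜 s (f i)) : ConvexOn 𝕜 s fun x => ∑ i ∈ t, f i x := by
  classical
  induction t using Finset.induction_on with
  | empty => simpa using convexOn_const 0 hs
  | insert i t hi ih =>
    simp only [Finset.sum_insert hi]
    exact (hf i (t.mem_insert_self i)).add (ih fun j hj => hf j (Finset.mem_insert_of_mem hj))

theorem convexOn_max_log_div_zero (s : ℝ) : ConvexOn ℝ (Ioi 0) fun x => max (log (s / x)) 0 := by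
  rcases eq_or_ne s 0 with rfl | hs
  · simpa using convexOn_const (0 : ℝ) (convex_Ioi (0 : ℝ))
  refine ConvexOn.sup ?_ (convexOn_const 0 (convex_Ioi 0))
  refine ((convexOn_const (log s) (convex_Ioi 0)).sub strictConcaveOn_log_Ioi.concaveOn).congr ?_
  intro x hx
  simp [log_div hs (ne_of_gt hx)]

theorem convexOn_sum_max_log_div_zero {ι : Type*} [Fintype ι] (s : ι → ℝ) :
    ConvexOn ℝ {x : ι → ℝ | ∀ i, 0 < x i} fun x => ∑ i, max (log (s i / x i)) 0 := by
  have hC : Convex ℝ {x : ι → ℝ | ∀ i, 0 < x i} := by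
    simpa [Set.pi] using convex_pi (s := univ) fun i _ => convex_Ioi (0 : ℝ)
  refine ConvexOn.finset_sum _ hC fun i _ => ?_
  have hproj := (convexOn_max_log_div_zero (s i)).comp_linearMap
    (LinearMap.proj (R := ℝ) (φ := fun _ : ι => ℝ) i)
  exact hproj.subset (fun _ hx => hx i) hC

theorem waterfilling_value_convexOn_general (d : ℕ) (hd : 1 ≤ d) (s : Fin d → ℝ) :
    ConvexOn ℝ (Set.Ioi (0 : ℝ)) (fun D =>
      sInf {r : ℝ | ∃ Di : Fin d → ℝ, (∀ i, 0 < Di i) ∧ (∑ i, Di i) = D ∧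
        r = ∑ i, max (Real.log (s i / Di i)) 0}) := by
  let total : (Fin d → ℝ) →ₗ[ℝ] ℝ := ∑ i, LinearMap.proj i
  have hcost_bdd : BddBelow ((fun x : Fin d → ℝ => ∑ i, max (log (s i / x i)) 0) ''
      {x | ∀ i, 0 < x i}) :=
    ⟨0, by rintro _ ⟨x, -, rfl⟩; exact Finset.sum_nonneg fun i _ => le_max_right _ _⟩
  have hsplit : Ioi 0 ⊆ total '' {x | ∀ i, 0 < x i} := by
    intro D (hD : 0 < D)
    have hd' : (0 : ℝ) < d := by exact_mod_cast hd
    refine ⟨fun _ => D / d, fun _ => by positivity, ?_⟩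
    simp [total, field]
  refine ((convexOn_sum_max_log_div_zero s).sInf_image_fiber hcost_bdd total (convex_Ioi 0)
    hsplit).congr fun D _ => ?_
  beta_reduce
  congr 1
  ext r
  simp [total, and_assoc, eq_comm]

/-- Convexity of the reverse water-filling value: the function
`F(D) = inf {Σ max{ln(s i / D i), 0} : D i > 0, Σ D i = D}` is convex on `(0, ∞)`. -/
theorem waterfilling_value_convexOn (d : ℕ) (hd : 1 ≤ d) (s : Fin d → ℝ)
    (hs : ∀ i, 0 < s i) :
    ConvexOn ℝ (Set.Ioi (0 : ℝ)) (fun D =>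
      sInf {r : ℝ | ∃ Di : Fin d → ℝ, (∀ i, 0 < Di i) ∧ (∑ i, Di i) = D ∧
        r = ∑ i, max (Real.log (s i / Di i)) 0}) :=
  waterfilling_value_convexOn_general d hd s
end

section
/- Let d ≥ 1 and let μ be a probability measure on ℝ^d × ℝ^d, viewed as the joint law of (X, Y) with X = (X₁, …, X_d) and Y = (Y₁, …, Y_d). Assume the marginal law of X is a product measure, i.e., the components X₁, …, X_d are independent. Then KL(μ ‖ law(X) ⊗ law(Y)) ≥ Σ_{i=1}^d KL(law(X_i, Y_i) ‖ law(X_i) ⊗ law(Y_i)); that is, the mutual information I(X; Y) is at least the sum of the componentwise mutual informations I(X_i; Y_i). -/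
/-!
Let `P = μ.fst ⊗ μ.snd`, let `f = dμ/dP`, and let `pᵢ` be the density of the law of `(Xᵢ, Yᵢ)`
with respect to the product of its marginals. Because the law of `X` is the product of the laws
of the `Xᵢ`, Tonelli's theorem shows that `g(x, y) = ∏ᵢ pᵢ(xᵢ, yᵢ)` has `P`-mass at most one. Then
`∑ᵢ I(Xᵢ; Yᵢ) - I(X; Y) = ∫ log (g / f) dμ ≤ ∫ (g / f - 1) dμ ≤ ∫ g dP - 1 ≤ 0`.
-/

open MeasureTheory

open Classical in
/-- The Kullback–Leibler divergence (in nats) of `μ` with respect to `ν`: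
`∫ log(dμ/dν) dμ` when `μ ≪ ν` and the log-likelihood ratio is integrable,
and `+∞` otherwise. -/
noncomputable def klDiv {α : Type*} [MeasurableSpace α] (μ ν : Measure α) : EReal :=
  if μ ≪ ν ∧ Integrable (llr μ ν) μ then ((∫ x, llr μ ν x ∂μ : ℝ) : EReal)
  else ⊤

open Real
open scoped ENNReal

@[norm_cast]
lemma EReal.coe_finsetSum {ι : Type*} (s : Finset ι) (f : ι → ℝ) :
    ((∑ i ∈ s, f i : ℝ) : EReal) = ∑ i ∈ s, (f i : EReal) :=
  map_sum (⟨⟨((↑) : ℝ → EReal), EReal.coe_zero⟩, EReal.coe_add⟩ : ℝ →+ EReal) f s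

lemma klDiv_of_ac_of_integrable {α : Type*} [MeasurableSpace α] {μ ν : Measure α} (hμν : μ ≪ ν)
    (h_int : Integrable (llr μ ν) μ) : klDiv μ ν = ((∫ x, llr μ ν x ∂μ : ℝ) : EReal) :=
  if_pos ⟨hμν, h_int⟩

lemma integral_log_le_integral_llr {α : Type*} [MeasurableSpace α] {μ ν : Measure α}
    [IsProbabilityMeasure μ] [SigmaFinite ν] (hμν : μ ≪ ν) (h_int : Integrable (llr μ ν) μ)
    {g : α → ℝ≥0∞} (hg : Measurable g) (hg_le : ∫⁻ x, g x ∂ν ≤ 1) (hg_pos : ∀ᵐ x ∂μ, 0 < g x)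
    (h_log : Integrable (fun x ↦ log (g x).toReal) μ) :
    ∫ x, log (g x).toReal ∂μ ≤ ∫ x, llr μ ν x ∂μ := by
  set f := μ.rnDeriv ν
  have h_ratio : AEMeasurable (fun x ↦ g x / f x) μ :=
    (hg.div (Measure.measurable_rnDeriv μ ν)).aemeasurable
  have h_ratio_le : ∫⁻ x, g x / f x ∂μ ≤ 1 := calc
    ∫⁻ x, g x / f x ∂μ = ∫⁻ x, f x * (g x / f x) ∂ν :=
      (lintegral_rnDeriv_mul hμν (hg.div (Measure.measurable_rnDeriv μ ν)).aemeasurable).symm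
    _ ≤ ∫⁻ x, g x ∂ν := lintegral_mono fun x ↦ ENNReal.mul_div_le
    _ ≤ 1 := hg_le
  have h_ratio_int : Integrable (fun x ↦ (g x / f x).toReal) μ :=
    integrable_toReal_of_lintegral_ne_top h_ratio (h_ratio_le.trans_lt ENNReal.one_lt_top).ne
  have h_ratio_integral : ∫ x, (g x / f x).toReal ∂μ ≤ 1 := by
    rw [integral_toReal h_ratio (ae_lt_top' h_ratio (h_ratio_le.trans_lt ENNReal.one_lt_top).ne)]
    exact ENNReal.toReal_le_of_le_ofReal zero_le_one (by simpa using h_ratio_le)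
  have hg_lt_top : ∀ᵐ x ∂μ, g x < ∞ :=
    hμν.ae_le (ae_lt_top hg (hg_le.trans_lt ENNReal.one_lt_top).ne)
  have h_pointwise : ∀ᵐ x ∂μ, log (g x).toReal - llr μ ν x ≤ (g x / f x).toReal - 1 := by
    filter_upwards [hg_pos, hg_lt_top, Measure.rnDeriv_pos hμν,
      hμν.ae_le (Measure.rnDeriv_lt_top μ ν)] with x hg0 hgt hf0 hft
    have hg_real := ENNReal.toReal_pos hg0.ne' hgt.ne
    have hf_real := ENNReal.toReal_pos hf0.ne' hft.ne
    rw [llr_def, ENNReal.toReal_div, ← Real.log_div hg_real.ne' hf_real.ne']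
    exact Real.log_le_sub_one_of_pos (div_pos hg_real hf_real)
  rw [← sub_nonpos]
  calc ∫ x, log (g x).toReal ∂μ - ∫ x, llr μ ν x ∂μ
      = ∫ x, (log (g x).toReal - llr μ ν x) ∂μ := (integral_sub h_log h_int).symm
    _ ≤ ∫ x, ((g x / f x).toReal - 1) ∂μ :=
      integral_mono_ae (h_log.sub h_int) (h_ratio_int.sub (integrable_const 1)) h_pointwise
    _ = ∫ x, (g x / f x).toReal ∂μ - 1 := by
      rw [integral_sub h_ratio_int (integrable_const 1), integral_const, probReal_univ, one_smul]
    _ ≤ 0 := sub_nonpos.mpr h_ratio_integral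

namespace MeasureTheory.Measure

variable {α β γ δ : Type*} [MeasurableSpace α] [MeasurableSpace β] [MeasurableSpace γ]
  [MeasurableSpace δ]

lemma fst_map_prodMap (ρ : Measure (α × β)) {f : α → γ} {g : β → δ} (hf : Measurable f)
    (hg : Measurable g) : (ρ.map (Prod.map f g)).fst = ρ.fst.map f := by
  rw [Measure.fst, Measure.fst, map_map measurable_fst (hf.prodMap hg), map_map hf measurable_fst]
  rfl

lemma snd_map_prodMap (ρ : Measure (α × β)) {f : α → γ} {g : β → δ} (hf : Measurable f)
    (hg : Measurable g) : (ρ.map (Prod.map f g)).snd = ρ.snd.map g := by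
  rw [Measure.snd, Measure.snd, map_map measurable_snd (hf.prodMap hg), map_map hg measurable_snd]
  rfl

lemma map_prodMap_fst_prod_snd (ρ : Measure (α × β)) [IsFiniteMeasure ρ] {f : α → γ}
    {g : β → δ} (hf : Measurable f) (hg : Measurable g) :
    (ρ.fst.prod ρ.snd).map (Prod.map f g)
      = (ρ.map (Prod.map f g)).fst.prod (ρ.map (Prod.map f g)).snd := by
  rw [fst_map_prodMap ρ hf hg, snd_map_prodMap ρ hf hg, map_prod_map _ _ hf hg]

lemma AbsolutelyContinuous.map_prodMap_fst_prod_snd {ρ : Measure (α × β)} [IsFiniteMeasure ρ]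
    (hρ : ρ ≪ ρ.fst.prod ρ.snd) {f : α → γ} {g : β → δ} (hf : Measurable f)
    (hg : Measurable g) :
    ρ.map (Prod.map f g) ≪ (ρ.map (Prod.map f g)).fst.prod (ρ.map (Prod.map f g)).snd :=
  Measure.map_prodMap_fst_prod_snd ρ hf hg ▸ hρ.map (hf.prodMap hg)

lemma integrable_llr_map_prodMap {ρ : Measure (α × β)} [IsFiniteMeasure ρ]
    (hρ : ρ ≪ ρ.fst.prod ρ.snd) (h_int : Integrable (llr ρ (ρ.fst.prod ρ.snd)) ρ) {f : α → γ}
    {g : β → δ} (hf : Measurable f) (hg : Measurable g) :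
    Integrable (llr (ρ.map (Prod.map f g))
      ((ρ.map (Prod.map f g)).fst.prod (ρ.map (Prod.map f g)).snd)) (ρ.map (Prod.map f g)) :=
  map_prodMap_fst_prod_snd ρ hf hg ▸
    InformationTheory.integrable_llr_map hρ (hf.prodMap hg) h_int

lemma ae_lintegral_rnDeriv_fst_prod_snd_le_one (ρ : Measure (α × β)) [IsFiniteMeasure ρ] :
    ∀ᵐ b ∂ρ.snd, ∫⁻ a, ρ.rnDeriv (ρ.fst.prod ρ.snd) (a, b) ∂ρ.fst ≤ 1 := by
  have hf := ρ.measurable_rnDeriv (ρ.fst.prod ρ.snd)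
  refine ae_le_of_forall_setLIntegral_le_of_sigmaFinite hf.lintegral_prod_left' fun s hs _ ↦ ?_
  calc ∫⁻ b in s, ∫⁻ a, ρ.rnDeriv (ρ.fst.prod ρ.snd) (a, b) ∂ρ.fst ∂ρ.snd
      = ∫⁻ z in Set.univ ×ˢ s, ρ.rnDeriv (ρ.fst.prod ρ.snd) z ∂(ρ.fst.prod ρ.snd) := by
        rw [← prod_restrict, restrict_univ, lintegral_prod_symm _ hf.aemeasurable]
    _ ≤ ρ (Set.univ ×ˢ s) := setLIntegral_rnDeriv_le _
    _ = ∫⁻ _ in s, 1 ∂ρ.snd := by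
        rw [setLIntegral_one, snd_apply hs, ← Set.univ_prod]

end MeasureTheory.Measure

section Coordinates

variable {ι : Type*} {X Y : ι → Type*} [∀ i, MeasurableSpace (X i)] [∀ i, MeasurableSpace (Y i)]

def coordPair (i : ι) : ((i : ι) → X i) × ((i : ι) → Y i) → X i × Y i :=
  Prod.map (Function.eval i) (Function.eval i)

@[fun_prop]
lemma measurable_coordPair (i : ι) : Measurable (coordPair (X := X) (Y := Y) i) :=
  (measurable_pi_apply i).prodMap (measurable_pi_apply i)

variable [Fintype ι]

lemma lintegral_pi_prod_eq_prod (ν : (i : ι) → Measure (X i)) [∀ i, IsProbabilityMeasure (ν i)]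
    {f : (i : ι) → X i → ℝ≥0∞} (hf : ∀ i, Measurable (f i)) :
    ∫⁻ x, ∏ i, f i (x i) ∂Measure.pi ν = ∏ i, ∫⁻ t, f i t ∂ν i := by
  refine (ProbabilityTheory.lintegral_prod_eq_prod_lintegral_of_indepFun Finset.univ
    (fun i (x : (i : ι) → X i) ↦ f i (x i))
    (ProbabilityTheory.iIndepFun_pi fun i ↦ (hf i).aemeasurable)
    fun i ↦ (hf i).comp (measurable_pi_apply i)).trans ?_
  exact Finset.prod_congr rfl fun i _ ↦ (measurePreserving_eval ν i).lintegral_comp (hf i)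

lemma lintegral_pi_prod_le_one (ν : (i : ι) → Measure (X i))
    [∀ i, IsProbabilityMeasure (ν i)] (β : Measure ((i : ι) → Y i)) [IsProbabilityMeasure β]
    {p : (i : ι) → X i × Y i → ℝ≥0∞} (hp : ∀ i, Measurable (p i))
    (hp_le : ∀ i, ∀ᵐ y ∂β.map (Function.eval i), ∫⁻ x, p i (x, y) ∂ν i ≤ 1) :
    ∫⁻ z, ∏ i, p i (z.1 i, z.2 i) ∂(Measure.pi ν).prod β ≤ 1 := by
  have hp_le' : ∀ᵐ y ∂β, ∀ i, ∫⁻ x, p i (x, y i) ∂ν i ≤ 1 :=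
    ae_all_iff.mpr fun i ↦ ae_of_ae_map (measurable_pi_apply i).aemeasurable (hp_le i)
  have h_meas : Measurable fun z : ((i : ι) → X i) × ((i : ι) → Y i) ↦ ∏ i, p i (z.1 i, z.2 i) :=
    Finset.measurable_prod _ fun i _ ↦ (hp i).comp (by fun_prop)
  calc ∫⁻ z, ∏ i, p i (z.1 i, z.2 i) ∂(Measure.pi ν).prod β
      = ∫⁻ y, ∏ i, ∫⁻ x, p i (x, y i) ∂ν i ∂β := by
        rw [lintegral_prod_symm _ h_meas.aemeasurable]
        exact lintegral_congr fun y ↦ lintegral_pi_prod_eq_prod ν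
          (f := fun i x ↦ p i (x, y i)) fun i ↦ (hp i).comp (by fun_prop)
    _ ≤ ∫⁻ _, 1 ∂β := lintegral_mono_ae <| hp_le'.mono fun y hy ↦
        Finset.prod_le_one' fun i _ ↦ hy i
    _ = 1 := by simp

variable (μ : Measure (((i : ι) → X i) × ((i : ι) → Y i))) [IsProbabilityMeasure μ]
  {ν : (i : ι) → Measure (X i)} [∀ i, IsProbabilityMeasure (ν i)]

lemma lintegral_prod_rnDeriv_map_coordPair_le_one (hfst : μ.fst = Measure.pi ν) :
    ∫⁻ z, ∏ i, (μ.map (coordPair i)).rnDeriv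
        ((μ.map (coordPair i)).fst.prod (μ.map (coordPair i)).snd) (coordPair i z)
      ∂(μ.fst.prod μ.snd) ≤ 1 := by
  have h_fst (i : ι) : (μ.map (coordPair i)).fst = ν i := by
    rw [coordPair, Measure.fst_map_prodMap μ (measurable_pi_apply i) (measurable_pi_apply i),
      hfst, (measurePreserving_eval ν i).map_eq]
  have h_snd (i : ι) : (μ.map (coordPair i)).snd = μ.snd.map (Function.eval i) :=
    Measure.snd_map_prodMap μ (measurable_pi_apply i) (measurable_pi_apply i)
  rw [hfst]
  refine lintegral_pi_prod_le_one ν μ.snd (fun i ↦ Measure.measurable_rnDeriv _ _) fun i ↦ ?_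
  rw [← h_snd, ← h_fst]
  exact Measure.ae_lintegral_rnDeriv_fst_prod_snd_le_one (μ.map (coordPair i))

theorem sum_integral_llr_map_coordPair_le (hfst : μ.fst = Measure.pi ν)
    (hac : μ ≪ μ.fst.prod μ.snd) (h_int : Integrable (llr μ (μ.fst.prod μ.snd)) μ) :
    ∑ i, ∫ w, llr (μ.map (coordPair i))
        ((μ.map (coordPair i)).fst.prod (μ.map (coordPair i)).snd) w ∂(μ.map (coordPair i))
      ≤ ∫ z, llr μ (μ.fst.prod μ.snd) z ∂μ := by
  set ρ : (i : ι) → Measure (X i × Y i) := fun i ↦ μ.map (coordPair i)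
  set p : (i : ι) → X i × Y i → ℝ≥0∞ := fun i ↦ (ρ i).rnDeriv ((ρ i).fst.prod (ρ i).snd)
  have hac_i (i : ι) : ρ i ≪ (ρ i).fst.prod (ρ i).snd :=
    hac.map_prodMap_fst_prod_snd (measurable_pi_apply i) (measurable_pi_apply i)
  have h_int_comp (i : ι) :
      Integrable (fun z ↦ llr (ρ i) ((ρ i).fst.prod (ρ i).snd) (coordPair i z)) μ :=
    (Measure.integrable_llr_map_prodMap hac h_int (measurable_pi_apply i)
      (measurable_pi_apply i)).comp_measurable (measurable_coordPair i)
  have hp_pos : ∀ᵐ z ∂μ, ∀ i, 0 < p i (coordPair i z) ∧ p i (coordPair i z) < ∞ :=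
    ae_all_iff.mpr fun i ↦ ae_of_ae_map (measurable_coordPair i).aemeasurable <|
      (Measure.rnDeriv_pos (hac_i i)).and ((hac_i i).ae_le (Measure.rnDeriv_lt_top _ _))
  have h_log : (fun z ↦ log (∏ i, p i (coordPair i z)).toReal) =ᵐ[μ]
      fun z ↦ ∑ i, llr (ρ i) ((ρ i).fst.prod (ρ i).snd) (coordPair i z) := by
    filter_upwards [hp_pos] with z hz
    rw [ENNReal.toReal_prod,
      Real.log_prod fun i _ ↦ (ENNReal.toReal_pos (hz i).1.ne' (hz i).2.ne).ne']
    rfl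
  calc ∑ i, ∫ w, llr (ρ i) ((ρ i).fst.prod (ρ i).snd) w ∂(ρ i)
      = ∫ z, ∑ i, llr (ρ i) ((ρ i).fst.prod (ρ i).snd) (coordPair i z) ∂μ := by
        rw [integral_finsetSum _ fun i _ ↦ h_int_comp i]
        exact Finset.sum_congr rfl fun i _ ↦ integral_map (measurable_coordPair i).aemeasurable
          (stronglyMeasurable_llr _ _).aestronglyMeasurable
    _ = ∫ z, log (∏ i, p i (coordPair i z)).toReal ∂μ := (integral_congr_ae h_log).symm
    _ ≤ ∫ z, llr μ (μ.fst.prod μ.snd) z ∂μ :=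
        integral_log_le_integral_llr hac h_int
          (Finset.measurable_prod _ fun i _ ↦ (Measure.measurable_rnDeriv _ _).comp (by fun_prop))
          (lintegral_prod_rnDeriv_map_coordPair_le_one μ hfst)
          (hp_pos.mono fun z hz ↦ CanonicallyOrderedAdd.prod_pos.mpr fun i _ ↦ (hz i).1)
          ((integrable_finsetSum _ fun i _ ↦ h_int_comp i).congr h_log.symm)

end Coordinates

theorem mutualInfo_superadditive_general (d : ℕ)
    (μ : Measure ((Fin d → ℝ) × (Fin d → ℝ))) (hμ : IsProbabilityMeasure μ)
    (hindep : ∃ ν : Fin d → Measure ℝ, (∀ i, IsProbabilityMeasure (ν i)) ∧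
      μ.fst = Measure.pi ν) :
    ∑ i, klDiv (μ.map (fun p => (p.1 i, p.2 i)))
        ((μ.map (fun p => (p.1 i, p.2 i))).fst.prod
          ((μ.map (fun p => (p.1 i, p.2 i))).snd))
      ≤ klDiv μ (μ.fst.prod μ.snd) := by
  obtain ⟨ν, hν, hfst⟩ := hindep
  by_cases h : μ ≪ μ.fst.prod μ.snd ∧ Integrable (llr μ (μ.fst.prod μ.snd)) μ
  swap
  · rw [klDiv, if_neg h]
    exact le_top
  obtain ⟨hac, h_int⟩ := h
  have h_coord (i : Fin d) : klDiv (μ.map (coordPair i))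
      ((μ.map (coordPair i)).fst.prod (μ.map (coordPair i)).snd) = _ :=
    klDiv_of_ac_of_integrable
    (hac.map_prodMap_fst_prod_snd (measurable_pi_apply i) (measurable_pi_apply i))
    (Measure.integrable_llr_map_prodMap hac h_int (measurable_pi_apply i) (measurable_pi_apply i))
  change ∑ i, klDiv (μ.map (coordPair i))
      ((μ.map (coordPair i)).fst.prod (μ.map (coordPair i)).snd) ≤ _
  rw [klDiv_of_ac_of_integrable hac h_int, Finset.sum_congr rfl fun i _ ↦ h_coord i,
    ← EReal.coe_finsetSum]
  exact EReal.coe_le_coe (sum_integral_llr_map_coordPair_le μ hfst hac h_int)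

/-- Superadditivity of mutual information for a source with independent components:
if the first marginal of the joint law `μ` of `(X, Y)` is a product measure, then
`I(X; Y) ≥ Σ_i I(X_i; Y_i)`. -/
theorem mutualInfo_superadditive (d : ℕ) (hd : 1 ≤ d)
    (μ : Measure ((Fin d → ℝ) × (Fin d → ℝ))) (hμ : IsProbabilityMeasure μ)
    (hindep : ∃ ν : Fin d → Measure ℝ, (∀ i, IsProbabilityMeasure (ν i)) ∧
      μ.fst = Measure.pi ν) :
    ∑ i, klDiv (μ.map (fun p => (p.1 i, p.2 i)))
        ((μ.map (fun p => (p.1 i, p.2 i))).fst.prod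
          ((μ.map (fun p => (p.1 i, p.2 i))).snd))
      ≤ klDiv μ (μ.fst.prod μ.snd) :=
  mutualInfo_superadditive_general d μ hμ hindep
end

section
/- Let Y be a real random variable with E[ln(1 + |Y|)] < ∞ and P(Y ≠ 0) > 0. Then there exists a unique s > 0 such that E[ln(1 + Y²/s²)] = ln 4. -/
/-!
For `s > 0` the bound `ln (1 + y²/s²) ≤ 2 ln (1 + |y|) + 2 ln (1 + 1/s)`, whose right-hand side
decreases in `s`, dominates the integrand uniformly on `s ≥ t > 0`. Hence
`F s = E[ln (1 + Y²/s²)]` is finite and continuous on `(0, ∞)` and tends to `0` at `∞`. Since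
`Y ≠ 0` with positive probability, `F` is strictly decreasing, and since `|Y| ≥ c > 0` with
positive probability, `F s ≥ P(|Y| ≥ c) ln (1 + c²/s²) → ∞` as `s → 0⁺`. By the intermediate
value theorem `F` takes every positive value, in particular `ln 4`, exactly once.
-/

open MeasureTheory Filter Set Topology

theorem integral_lt_integral_of_le_of_lt_on {α : Type*} [MeasurableSpace α] {μ : Measure α}
    {f g : α → ℝ} (hf : Integrable f μ) (hg : Integrable g μ) (hle : f ≤ g) {s : Set α}
    (hs : μ s ≠ 0) (hlt : ∀ x ∈ s, f x < g x) : ∫ x, f x ∂μ < ∫ x, g x ∂μ := by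
  rw [← sub_pos, ← integral_sub hg hf, integral_pos_iff_support_of_nonneg
    (fun x => sub_nonneg.2 (hle x)) (hg.sub hf)]
  exact pos_iff_ne_zero.2 (mt (measure_mono_null fun x hx => (sub_pos.2 (hlt x hx)).ne') hs)

theorem exists_pos_measure_setOf_le_abs_ne_zero {α : Type*} [MeasurableSpace α] {μ : Measure α}
    {f : α → ℝ} (hf : μ {x | f x ≠ 0} ≠ 0) : ∃ c > 0, μ {x | c ≤ |f x|} ≠ 0 := by
  have hcover : {x | f x ≠ 0} ⊆ ⋃ n : ℕ, {x | 1 / ((n : ℝ) + 1) ≤ |f x|} := fun x hx =>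
    mem_iUnion.2 ((exists_nat_one_div_lt (abs_pos.2 hx)).imp fun _ h => h.le)
  obtain ⟨n, hn⟩ := exists_measure_pos_of_not_measure_iUnion_null (mt (measure_mono_null hcover) hf)
  exact ⟨_, Nat.one_div_pos_of_nat, hn.ne'⟩

namespace Real

theorem log_one_add_sq_div_sq_nonneg (y s : ℝ) : 0 ≤ log (1 + y ^ 2 / s ^ 2) :=
  log_nonneg (le_add_of_nonneg_right (by positivity))

theorem log_one_add_sq_div_sq_le_of_le (y : ℝ) {s t : ℝ} (ht : 0 < t) (hts : t ≤ s) :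
    log (1 + y ^ 2 / s ^ 2) ≤ log (1 + y ^ 2 / t ^ 2) := by
  gcongr

theorem log_one_add_sq_div_sq_lt_of_lt {y s t : ℝ} (hy : y ≠ 0) (ht : 0 < t) (hts : t < s) :
    log (1 + y ^ 2 / s ^ 2) < log (1 + y ^ 2 / t ^ 2) := by
  have : 0 < y ^ 2 := by positivity
  gcongr

theorem log_one_add_sq_div_sq_le (y : ℝ) {s : ℝ} (hs : 0 < s) :
    log (1 + y ^ 2 / s ^ 2) ≤ 2 * (log (1 + |y|) + log (1 + s⁻¹)) := by
  have hsq : y ^ 2 / s ^ 2 = (|y| * s⁻¹) ^ 2 := by rw [mul_pow, sq_abs, inv_pow, div_eq_mul_inv]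
  have hys : 0 ≤ |y| * s⁻¹ := by positivity
  calc log (1 + y ^ 2 / s ^ 2) ≤ log (((1 + |y|) * (1 + s⁻¹)) ^ 2) := by
        gcongr
        rw [hsq]
        nlinarith [abs_nonneg y, inv_nonneg.2 hs.le]
    _ = 2 * (log (1 + |y|) + log (1 + s⁻¹)) := by
        rw [log_pow, log_mul (by positivity) (by positivity)]
        push_cast
        ring

theorem norm_log_one_add_sq_div_sq_le (y : ℝ) {s t : ℝ} (ht : 0 < t) (hts : t ≤ s) :
    ‖log (1 + y ^ 2 / s ^ 2)‖ ≤ 2 * (log (1 + |y|) + log (1 + t⁻¹)) := by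
  rw [norm_of_nonneg (log_one_add_sq_div_sq_nonneg y s)]
  exact (log_one_add_sq_div_sq_le_of_le y ht hts).trans (log_one_add_sq_div_sq_le y ht)

end Real

/-- `E[-ln p_s(Y)] = ln (π s) + cauchyLogMoment μ Y s` for the Cauchy density
`p_s(y) = s / (π (s² + y²))` of scale `s`. -/
noncomputable def cauchyLogMoment {Ω : Type*} [MeasurableSpace Ω] (μ : Measure Ω) (Y : Ω → ℝ)
    (s : ℝ) : ℝ :=
  ∫ ω, Real.log (1 + Y ω ^ 2 / s ^ 2) ∂μ

section CauchyLogMoment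

variable {Ω : Type*} [MeasurableSpace Ω] {μ : Measure Ω} {Y : Ω → ℝ}

theorem aestronglyMeasurable_log_one_add_sq_div_sq (hY : Measurable Y) (s : ℝ) :
    AEStronglyMeasurable (fun ω => Real.log (1 + Y ω ^ 2 / s ^ 2)) μ :=
  (measurable_const.add ((hY.pow_const 2).div_const _)).log.aestronglyMeasurable

variable [IsFiniteMeasure μ]

theorem integrable_two_mul_log_one_add_abs_add_const
    (hint : Integrable (fun ω => Real.log (1 + |Y ω|)) μ) (C : ℝ) :
    Integrable (fun ω => 2 * (Real.log (1 + |Y ω|) + C)) μ :=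
  (hint.add (integrable_const _)).const_mul 2

theorem integrable_log_one_add_sq_div_sq (hY : Measurable Y)
    (hint : Integrable (fun ω => Real.log (1 + |Y ω|)) μ) {s : ℝ} (hs : 0 < s) :
    Integrable (fun ω => Real.log (1 + Y ω ^ 2 / s ^ 2)) μ :=
  (integrable_two_mul_log_one_add_abs_add_const hint _).mono'
    (aestronglyMeasurable_log_one_add_sq_div_sq hY s)
    (ae_of_all _ fun ω => Real.norm_log_one_add_sq_div_sq_le (Y ω) hs le_rfl)

theorem strictAntiOn_cauchyLogMoment (hY : Measurable Y)
    (hint : Integrable (fun ω => Real.log (1 + |Y ω|)) μ) (hne : μ {ω | Y ω ≠ 0} ≠ 0) :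
    StrictAntiOn (cauchyLogMoment μ Y) (Ioi 0) := fun _ ht _ hs hts =>
  integral_lt_integral_of_le_of_lt_on (integrable_log_one_add_sq_div_sq hY hint hs)
    (integrable_log_one_add_sq_div_sq hY hint ht)
    (fun ω => Real.log_one_add_sq_div_sq_le_of_le (Y ω) ht hts.le) hne
    (fun _ hω => Real.log_one_add_sq_div_sq_lt_of_lt hω ht hts)

theorem continuousOn_cauchyLogMoment (hY : Measurable Y)
    (hint : Integrable (fun ω => Real.log (1 + |Y ω|)) μ) :
    ContinuousOn (cauchyLogMoment μ Y) (Ioi 0) := by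
  intro s₀ hs₀
  have hs₀' : 0 < s₀ / 2 := half_pos hs₀
  refine ContinuousAt.continuousWithinAt <| continuousAt_of_dominated
    (Eventually.of_forall fun s => aestronglyMeasurable_log_one_add_sq_div_sq hY s) ?_
    (integrable_two_mul_log_one_add_abs_add_const hint (Real.log (1 + (s₀ / 2)⁻¹)))
    (ae_of_all _ fun ω => ?_)
  · filter_upwards [eventually_ge_nhds (half_lt_self hs₀)] with s hs
    exact ae_of_all _ fun ω => Real.norm_log_one_add_sq_div_sq_le (Y ω) hs₀' hs
  · have : s₀ ≠ 0 := hs₀.ne'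
    fun_prop (disch := positivity)

theorem tendsto_cauchyLogMoment_atTop (hY : Measurable Y)
    (hint : Integrable (fun ω => Real.log (1 + |Y ω|)) μ) :
    Tendsto (cauchyLogMoment μ Y) atTop (𝓝 0) := by
  have hlim : ∀ y : ℝ, Tendsto (fun s : ℝ => Real.log (1 + y ^ 2 / s ^ 2)) atTop (𝓝 0) := by
    intro y
    have h : Tendsto (fun s : ℝ => 1 + y ^ 2 / s ^ 2) atTop (𝓝 1) := by
      simpa using ((tendsto_const_nhds (x := y ^ 2)).div_atTop
        (tendsto_pow_atTop (α := ℝ) two_ne_zero)).const_add 1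
    simpa using h.log one_ne_zero
  unfold cauchyLogMoment
  simpa using tendsto_integral_filter_of_dominated_convergence _
    (Eventually.of_forall fun s => aestronglyMeasurable_log_one_add_sq_div_sq hY s)
    ((eventually_ge_atTop 1).mono fun s hs =>
      ae_of_all _ fun ω => Real.norm_log_one_add_sq_div_sq_le (Y ω) one_pos hs)
    (integrable_two_mul_log_one_add_abs_add_const hint (Real.log (1 + 1⁻¹)))
    (ae_of_all _ fun ω => hlim (Y ω))

theorem tendsto_cauchyLogMoment_nhdsGT_zero (hY : Measurable Y)
    (hint : Integrable (fun ω => Real.log (1 + |Y ω|)) μ) (hne : μ {ω | Y ω ≠ 0} ≠ 0) :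
    Tendsto (cauchyLogMoment μ Y) (𝓝[>] 0) atTop := by
  obtain ⟨c, hc, hA⟩ := exists_pos_measure_setOf_le_abs_ne_zero hne
  set A := {ω | c ≤ |Y ω|}
  have hAmeas : MeasurableSet A := measurableSet_le measurable_const hY.abs
  have hpA : 0 < μ.real A := ENNReal.toReal_pos hA (measure_ne_top _ _)
  have hlower : ∀ s > 0, Real.log (1 + c ^ 2 / s ^ 2) * μ.real A ≤ cauchyLogMoment μ Y s := by
    intro s hs
    have hint_s := integrable_log_one_add_sq_div_sq hY hint hs
    refine (setIntegral_ge_of_const_le_real hAmeas (measure_ne_top _ _) (fun ω hω => ?_)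
      hint_s.integrableOn).trans (setIntegral_le_integral hint_s
        (ae_of_all _ fun ω => Real.log_one_add_sq_div_sq_nonneg _ _))
    have : c ^ 2 ≤ Y ω ^ 2 := by rw [← sq_abs (Y ω)]; gcongr; exact hω
    gcongr
  have hbase : Tendsto (fun s : ℝ => Real.log (1 + c ^ 2 / s ^ 2) * μ.real A) (𝓝[>] 0) atTop := by
    refine Tendsto.atTop_mul_const hpA (Real.tendsto_log_atTop.comp
      (tendsto_atTop_add_const_left _ _ ?_))
    have h := (tendsto_pow_atTop two_ne_zero).comp tendsto_inv_nhdsGT_zero |>.const_mul_atTop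
      (pow_pos hc 2)
    simpa [Function.comp_def, div_eq_mul_inv] using h
  exact tendsto_atTop_mono' _ (eventually_mem_nhdsWithin.mono hlower) hbase

theorem existsUnique_cauchyLogMoment_eq (hY : Measurable Y)
    (hint : Integrable (fun ω => Real.log (1 + |Y ω|)) μ) (hne : μ {ω | Y ω ≠ 0} ≠ 0) {c : ℝ}
    (hc : 0 < c) : ∃! s, 0 < s ∧ cauchyLogMoment μ Y s = c := by
  obtain ⟨s, hs, hsc⟩ := isPreconnected_Ioi.intermediate_value_Ioi
    (le_principal_iff.2 (Ioi_mem_atTop 0))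
    (le_principal_iff.2 self_mem_nhdsWithin)
    (continuousOn_cauchyLogMoment hY hint) (tendsto_cauchyLogMoment_atTop hY hint)
    (tendsto_cauchyLogMoment_nhdsGT_zero hY hint hne) hc
  exact ⟨s, ⟨hs, hsc⟩, fun t ⟨ht, htc⟩ =>
    (strictAntiOn_cauchyLogMoment hY hint hne).injOn ht hs (htc.trans hsc.symm)⟩

end CauchyLogMoment

/-- Existence and uniqueness of the CB-strength: for a real random variable `Y`
with `E[ln(1 + |Y|)] < ∞` and `P(Y ≠ 0) > 0`, there is a unique `s > 0` such that
`E[ln(1 + Y²/s²)] = ln 4`. -/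
theorem cbStrength_exists_unique {Ω : Type*} [MeasurableSpace Ω] (P : Measure Ω)
    [IsProbabilityMeasure P] (Y : Ω → ℝ) (hY : Measurable Y)
    (hint : Integrable (fun ω => Real.log (1 + |Y ω|)) P)
    (hne : P {ω | Y ω ≠ 0} ≠ 0) :
    ∃! s : ℝ, 0 < s ∧ (∫ ω, Real.log (1 + (Y ω) ^ 2 / s ^ 2) ∂P) = Real.log 4 :=
  existsUnique_cauchyLogMoment_eq hY hint hne (Real.log_pos (by norm_num))
end

section
/- Let γ > 0 and let X be a Cauchy random variable with scale γ, i.e., with density x ↦ γ/(π(γ² + x²)). Then E[ln(1 + X²/γ²)] = ln 4, i.e., ∫_ℝ ln(1 + x²) · (1/(π(1 + x²))) dx = ln 4; consequently the CB-strength of X equals γ, and the differential entropy of X equals ln(4πγ). -/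
open MeasureTheory Real

/-- The Cauchy law with scale `γ`: the measure on `ℝ` with density
`x ↦ γ / (π * (γ² + x²))` with respect to Lebesgue measure. -/
noncomputable def cauchyLaw (γ : ℝ) : Measure ℝ :=
  volume.withDensity fun x => ENNReal.ofReal (γ / (π * (γ ^ 2 + x ^ 2)))

/-- The CB-strength of a law `ν` on `ℝ`:
`inf {s > 0 : E[ln(1 + Y²/s²)] ≤ ln 4}`. -/
noncomputable def cbStrength (ν : Measure ℝ) : ℝ :=
  sInf {s : ℝ | 0 < s ∧ (∫ y, Real.log (1 + y ^ 2 / s ^ 2) ∂ν) ≤ Real.log 4}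

/-! Substituting `x = tan θ` turns `∫ ln(1 + x²) / (π(1 + x²)) dx` into
`-(2/π) ∫_{-π/2}^{π/2} ln cos θ dθ = 2 ln 2`, and the scale-`γ` integral reduces to it by
`x ↦ x / γ`. Since `s ↦ E[ln(1 + X²/s²)]` is strictly decreasing, `γ` is the least `s` at which
it is `≤ ln 4`. Finally `-ln p(x) = ln(πγ) + ln(1 + x²/γ²)`, so the entropy is `ln(πγ) + ln 4`. -/

open Set ProbabilityTheory
open scoped NNReal

lemma hasDerivWithinAt_tan_Ioo {θ : ℝ} (hθ : θ ∈ Ioo (-(π / 2)) (π / 2)) :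
    HasDerivWithinAt tan (1 / cos θ ^ 2) (Ioo (-(π / 2)) (π / 2)) θ :=
  (hasDerivAt_tan (cos_pos_of_mem_Ioo hθ).ne').hasDerivWithinAt

lemma integrable_iff_integrableOn_comp_tan {g : ℝ → ℝ} :
    Integrable g ↔
      IntegrableOn (fun θ => 1 / cos θ ^ 2 * g (tan θ)) (Ioo (-(π / 2)) (π / 2)) := by
  rw [← integrableOn_univ, ← image_tan_Ioo, integrableOn_image_iff_integrableOn_abs_deriv_smul
    measurableSet_Ioo (fun _ => hasDerivWithinAt_tan_Ioo) injOn_tan]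
  refine integrableOn_congr_fun (fun θ _ => ?_) measurableSet_Ioo
  rw [abs_of_nonneg (by positivity), smul_eq_mul]

lemma integral_eq_integral_comp_tan (g : ℝ → ℝ) :
    ∫ x, g x = ∫ θ in Ioo (-(π / 2)) (π / 2), 1 / cos θ ^ 2 * g (tan θ) := by
  rw [← setIntegral_univ, ← image_tan_Ioo, integral_image_eq_integral_abs_deriv_smul
    measurableSet_Ioo (fun _ => hasDerivWithinAt_tan_Ioo) injOn_tan]
  refine setIntegral_congr_fun measurableSet_Ioo (fun θ _ => ?_)
  rw [abs_of_nonneg (by positivity), smul_eq_mul]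

lemma integral_log_cos_neg_pi_div_two_pi_div_two :
    ∫ θ in -(π / 2)..π / 2, log (cos θ) = -log 2 * π := by
  simp_rw [← sin_add_pi_div_two]
  rw [intervalIntegral.integral_comp_add_right (fun θ => log (sin θ)), neg_add_cancel,
    add_halves, integral_log_sin_zero_pi]

lemma cauchyPDFReal_zero_apply (γ : ℝ≥0) (x : ℝ) :
    cauchyPDFReal 0 γ x = γ / (π * (γ ^ 2 + x ^ 2)) := by
  rw [cauchyPDFReal_def, sub_zero, div_eq_mul_inv, mul_inv, add_comm]
  ring

lemma cauchyPDFReal_zero_one_apply (x : ℝ) : cauchyPDFReal 0 1 x = 1 / (π * (1 + x ^ 2)) := by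
  simp only [cauchyPDFReal_zero_apply, NNReal.coe_one, one_pow]

lemma cauchyPDFReal_zero_eq_inv_mul_comp_div (γ : ℝ≥0) (x : ℝ) :
    cauchyPDFReal 0 γ x = (γ : ℝ)⁻¹ * cauchyPDFReal 0 1 (x / γ) := by
  simp only [cauchyPDFReal_def', sub_zero, NNReal.coe_inv, NNReal.coe_one, div_one, inv_one,
    mul_one]
  ring

lemma one_div_cos_sq_mul_cauchyPDFReal_tan_mul_log {θ : ℝ}
    (hθ : θ ∈ Ioo (-(π / 2)) (π / 2)) :
    1 / cos θ ^ 2 * (cauchyPDFReal 0 1 (tan θ) * log (1 + tan θ ^ 2)) =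
      -(2 / π) * log (cos θ) := by
  have hcos : cos θ ≠ 0 := (cos_pos_of_mem_Ioo hθ).ne'
  simp only [cauchyPDFReal_def', sub_zero, NNReal.coe_one, div_one, inv_one, mul_one]
  rw [inv_one_add_tan_sq hcos, ← inv_inv (1 + tan θ ^ 2), inv_one_add_tan_sq hcos, log_inv,
    log_pow]
  field_simp
  ring

lemma integrable_cauchyPDFReal_zero_one_mul_log :
    Integrable fun x => cauchyPDFReal 0 1 x * log (1 + x ^ 2) := by
  rw [integrable_iff_integrableOn_comp_tan]
  refine IntegrableOn.congr_fun ?_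
    (fun θ hθ => (one_div_cos_sq_mul_cauchyPDFReal_tan_mul_log hθ).symm) measurableSet_Ioo
  refine (IntegrableOn.mono_set ?_ Ioo_subset_Ioc_self).const_mul _
  exact (intervalIntegrable_iff_integrableOn_Ioc_of_le (by linarith [pi_pos])).mp
    intervalIntegrable_log_cos

lemma integral_cauchyPDFReal_zero_one_mul_log :
    ∫ x, cauchyPDFReal 0 1 x * log (1 + x ^ 2) = log 4 := by
  rw [integral_eq_integral_comp_tan, setIntegral_congr_fun measurableSet_Ioo
      (fun θ hθ => one_div_cos_sq_mul_cauchyPDFReal_tan_mul_log hθ), integral_const_mul,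
    integral_Ioc_eq_integral_Ioo.symm, ← intervalIntegral.integral_of_le (by linarith [pi_pos]),
    integral_log_cos_neg_pi_div_two_pi_div_two, show (4 : ℝ) = 2 ^ 2 by norm_num, log_pow]
  field_simp
  ring

lemma integrable_cauchyPDFReal_zero_mul_comp_div {h : ℝ → ℝ}
    (hh : Integrable fun u => cauchyPDFReal 0 1 u * h u) {γ : ℝ≥0} (hγ : γ ≠ 0) :
    Integrable fun x => cauchyPDFReal 0 γ x * h (x / γ) := by
  simp_rw [cauchyPDFReal_zero_eq_inv_mul_comp_div γ, mul_assoc]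
  exact (hh.comp_div (NNReal.coe_ne_zero.mpr hγ)).const_mul _

lemma integral_cauchyPDFReal_zero_mul_comp_div (h : ℝ → ℝ) {γ : ℝ≥0} (hγ : γ ≠ 0) :
    ∫ x, cauchyPDFReal 0 γ x * h (x / γ) = ∫ u, cauchyPDFReal 0 1 u * h u := by
  simp_rw [cauchyPDFReal_zero_eq_inv_mul_comp_div γ, mul_assoc]
  rw [integral_const_mul, Measure.integral_comp_div (fun u => cauchyPDFReal 0 1 u * h u),
    smul_eq_mul, abs_of_nonneg γ.coe_nonneg, ← mul_assoc,
    inv_mul_cancel₀ (NNReal.coe_ne_zero.mpr hγ), one_mul]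

lemma integrable_cauchyPDFReal_zero_mul_log {γ : ℝ≥0} (hγ : γ ≠ 0) :
    Integrable fun x => cauchyPDFReal 0 γ x * log (1 + (x / γ) ^ 2) :=
  integrable_cauchyPDFReal_zero_mul_comp_div integrable_cauchyPDFReal_zero_one_mul_log hγ

lemma integral_cauchyPDFReal_zero_mul_log {γ : ℝ≥0} (hγ : γ ≠ 0) :
    ∫ x, cauchyPDFReal 0 γ x * log (1 + (x / γ) ^ 2) = log 4 :=
  (integral_cauchyPDFReal_zero_mul_comp_div (fun u => log (1 + u ^ 2)) hγ).trans
    integral_cauchyPDFReal_zero_one_mul_log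

lemma log_cauchyPDFReal_zero {γ : ℝ≥0} (hγ : γ ≠ 0) (x : ℝ) :
    log (cauchyPDFReal 0 γ x) = -(log (π * γ) + log (1 + (x / γ) ^ 2)) := by
  have hγ' : (γ : ℝ) ≠ 0 := NNReal.coe_ne_zero.mpr hγ
  rw [cauchyPDFReal_def', sub_zero, NNReal.coe_inv, ← mul_inv, ← mul_inv, log_inv,
    log_mul (by positivity) (by positivity)]

lemma neg_integral_cauchyPDFReal_zero_mul_log_self {γ : ℝ≥0} (hγ : γ ≠ 0) :
    -∫ x, cauchyPDFReal 0 γ x * log (cauchyPDFReal 0 γ x) = log (4 * π * γ) := by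
  have hγ' : (γ : ℝ) ≠ 0 := NNReal.coe_ne_zero.mpr hγ
  simp_rw [log_cauchyPDFReal_zero hγ, mul_neg, mul_add]
  rw [integral_neg, neg_neg, integral_add ((integrable_cauchyPDFReal 0).mul_const _)
      (integrable_cauchyPDFReal_zero_mul_log hγ), integral_mul_const,
    integral_cauchyPDFReal_eq_one 0 hγ, integral_cauchyPDFReal_zero_mul_log hγ, one_mul,
    mul_assoc, log_mul (x := 4) (by norm_num) (by positivity), add_comm]

lemma integral_log_one_add_sq_div_sq_lt {ν : Measure ℝ} [IsFiniteMeasure ν] (hν : ν {0}ᶜ ≠ 0)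
    {s t : ℝ} (hs : 0 < s) (hst : s < t)
    (ht : Integrable (fun y => log (1 + y ^ 2 / t ^ 2)) ν) :
    ∫ y, log (1 + y ^ 2 / t ^ 2) ∂ν < ∫ y, log (1 + y ^ 2 / s ^ 2) ∂ν := by
  have ht0 : 0 < t := hs.trans hst
  have hsq : s ^ 2 < t ^ 2 := by gcongr
  have hmono : ∀ y, log (1 + y ^ 2 / t ^ 2) ≤ log (1 + y ^ 2 / s ^ 2) := fun y => by gcongr
  have hstrict : ∀ y ≠ (0 : ℝ), log (1 + y ^ 2 / t ^ 2) < log (1 + y ^ 2 / s ^ 2) :=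
    by
    intro y hy
    have : 0 < y ^ 2 := by positivity
    gcongr
  have hbound : ∀ y, log (1 + y ^ 2 / s ^ 2) ≤ log (t ^ 2 / s ^ 2) + log (1 + y ^ 2 / t ^ 2) := by
    intro y
    rw [← log_mul (by positivity) (by positivity)]
    refine log_le_log (by positivity) ?_
    have hexpand : t ^ 2 / s ^ 2 * (1 + y ^ 2 / t ^ 2) = t ^ 2 / s ^ 2 + y ^ 2 / s ^ 2 := by
      field_simp
    linarith [(one_le_div (by positivity)).2 hsq.le]
  have hs_int : Integrable (fun y => log (1 + y ^ 2 / s ^ 2)) ν :=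
    ((integrable_const _).add ht).mono' (Measurable.log (by fun_prop)).aestronglyMeasurable
      (ae_of_all _ fun y => by
        rw [norm_of_nonneg (log_nonneg (by simp; positivity))]; exact hbound y)
  rw [← sub_pos, ← integral_sub hs_int ht, integral_pos_iff_support_of_nonneg
    (fun y => sub_nonneg.2 (hmono y)) (hs_int.sub ht)]
  exact (pos_iff_ne_zero.2 hν).trans_le
    (measure_mono fun y hy => (sub_pos.2 (hstrict y hy)).ne')

lemma cbStrength_eq_of_integral_eq {ν : Measure ℝ} [IsFiniteMeasure ν] (hν : ν {0}ᶜ ≠ 0)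
    {s : ℝ} (hs : 0 < s) (hint : Integrable (fun y => log (1 + y ^ 2 / s ^ 2)) ν)
    (h : ∫ y, log (1 + y ^ 2 / s ^ 2) ∂ν = log 4) : cbStrength ν = s := by
  have hlb : ∀ t ∈ {t : ℝ | 0 < t ∧ ∫ y, log (1 + y ^ 2 / t ^ 2) ∂ν ≤ log 4}, s ≤ t :=
    fun t ht => not_lt.1 fun hts =>
      (integral_log_one_add_sq_div_sq_lt hν ht.1 hts hint).not_ge (h ▸ ht.2)
  exact le_antisymm (csInf_le ⟨s, hlb⟩ ⟨hs, h.le⟩) (le_csInf ⟨s, hs, h.le⟩ hlb)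

lemma cauchyMeasure_singleton (x₀ : ℝ) {γ : ℝ≥0} (hγ : γ ≠ 0) (x : ℝ) :
    cauchyMeasure x₀ γ {x} = 0 := by
  rw [cauchyMeasure_of_scale_ne_zero x₀ hγ]
  exact withDensity_absolutelyContinuous _ _ Real.volume_singleton

lemma integral_cauchyMeasure (x₀ : ℝ) {γ : ℝ≥0} (hγ : γ ≠ 0) (g : ℝ → ℝ) :
    ∫ y, g y ∂cauchyMeasure x₀ γ = ∫ x, cauchyPDFReal x₀ γ x * g x := by
  rw [cauchyMeasure_of_scale_ne_zero x₀ hγ, integral_withDensity_eq_integral_toReal_smul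
    (measurable_cauchyPDF x₀ γ) (ae_of_all _ fun _ => ENNReal.ofReal_lt_top)]
  simp only [cauchyPDF, ENNReal.toReal_ofReal (cauchyPDF_pos x₀ hγ _).le, smul_eq_mul]

lemma integrable_cauchyMeasure_iff (x₀ : ℝ) {γ : ℝ≥0} (hγ : γ ≠ 0) {g : ℝ → ℝ} :
    Integrable g (cauchyMeasure x₀ γ) ↔ Integrable fun x => cauchyPDFReal x₀ γ x * g x := by
  rw [cauchyMeasure_of_scale_ne_zero x₀ hγ, integrable_withDensity_iff
    (measurable_cauchyPDF x₀ γ) (ae_of_all _ fun _ => ENNReal.ofReal_lt_top)]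
  simp only [cauchyPDF, ENNReal.toReal_ofReal (cauchyPDF_pos x₀ hγ _).le, mul_comm]

lemma cbStrength_cauchyMeasure {γ : ℝ≥0} (hγ : γ ≠ 0) : cbStrength (cauchyMeasure 0 γ) = γ := by
  refine cbStrength_eq_of_integral_eq ?_ (NNReal.coe_pos.2 (pos_iff_ne_zero.2 hγ)) ?_ ?_
  · rw [(prob_compl_eq_one_iff (measurableSet_singleton 0)).2 (cauchyMeasure_singleton 0 hγ 0)]
    exact one_ne_zero
  · simpa only [integrable_cauchyMeasure_iff 0 hγ, div_pow]
      using integrable_cauchyPDFReal_zero_mul_log hγ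
  · simpa only [integral_cauchyMeasure 0 hγ, div_pow] using integral_cauchyPDFReal_zero_mul_log hγ

lemma cauchyLaw_coe_eq_cauchyMeasure {γ : ℝ≥0} (hγ : γ ≠ 0) :
    cauchyLaw γ = cauchyMeasure 0 γ := by
  rw [cauchyLaw, cauchyMeasure_of_scale_ne_zero 0 hγ]
  congr with x
  rw [cauchyPDF_def, cauchyPDFReal_zero_apply]

/-- For a Cauchy variable `X` of scale `γ`: `E[ln(1 + X²/γ²)] = ln 4`, equivalently
`∫ ln(1 + x²)/(π(1 + x²)) dx = ln 4`; consequently the CB-strength of `X` is `γ` and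
the differential entropy of `X` is `ln(4πγ)`. -/
theorem cauchy_strength_and_entropy (γ : ℝ) (hγ : 0 < γ) :
    (∫ x : ℝ, (γ / (π * (γ ^ 2 + x ^ 2))) * Real.log (1 + x ^ 2 / γ ^ 2)) = Real.log 4 ∧
    (∫ x : ℝ, (1 / (π * (1 + x ^ 2))) * Real.log (1 + x ^ 2)) = Real.log 4 ∧
    cbStrength (cauchyLaw γ) = γ ∧
    (-∫ x : ℝ, (γ / (π * (γ ^ 2 + x ^ 2))) * Real.log (γ / (π * (γ ^ 2 + x ^ 2))))
      = Real.log (4 * π * γ) := by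
  lift γ to ℝ≥0 using hγ.le
  have hγ0 : γ ≠ 0 := by exact_mod_cast hγ.ne'
  simp_rw [← cauchyPDFReal_zero_apply, ← div_pow, ← cauchyPDFReal_zero_one_apply,
    cauchyLaw_coe_eq_cauchyMeasure hγ0]
  exact ⟨integral_cauchyPDFReal_zero_mul_log hγ0, integral_cauchyPDFReal_zero_one_mul_log,
    cbStrength_cauchyMeasure hγ0, neg_integral_cauchyPDFReal_zero_mul_log_self hγ0⟩
end

section
/- Let d ≥ 1 and let Z be an ℝ^d-valued random vector with the standard isotropic (circular) Cauchy density f(x) = Γ((d+1)/2) · π^{-(d+1)/2} · (1 + ‖x‖²)^{-(d+1)/2}. Then E[ln(1 + ‖Z‖²)] = ln 4 + ψ((d+1)/2) + γ_e, where ψ(t) = Γ'(t)/Γ(t) is the digamma function and γ_e is the Euler–Mascheroni constant; i.e., ∫_{ℝ^d} Γ((d+1)/2) π^{-(d+1)/2} (1 + ‖x‖²)^{-(d+1)/2} ln(1 + ‖x‖²) dx = ln 4 + Γ'((d+1)/2)/Γ((d+1)/2) + γ_e. -/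
/-!
In polar coordinates the moment becomes a multiple of
`∫₀^∞ r^(d-1) (1+r²)^(-(d+1)/2) log(1+r²) dr`. The substitution `x = 1/(1+r²)` turns this into
`-½ ∫₀¹ log x · x^(-1/2) (1-x)^(d/2-1) dx`, the derivative in `u` of the Beta integral `B(u, d/2)`
at `u = 1/2`, that is `B(1/2, d/2) (ψ(1/2) - ψ((d+1)/2))`. Together with
`ψ(1/2) = -γ - 2 log 2` and the volume of the unit ball, all Gamma factors cancel.
-/

open MeasureTheory Real Set

lemma ofReal_cpow_mul_one_sub_cpow {x : ℝ} (hx : x ∈ Icc (0 : ℝ) 1) (u v : ℝ) :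
    (x : ℂ) ^ ((u : ℂ) - 1) * (1 - (x : ℂ)) ^ ((v : ℂ) - 1)
      = ((x ^ (u - 1) * (1 - x) ^ (v - 1) : ℝ) : ℂ) := by
  have h1x : (0 : ℝ) ≤ 1 - x := sub_nonneg.mpr hx.2
  rw [Complex.ofReal_mul, Complex.ofReal_cpow hx.1, Complex.ofReal_cpow h1x]
  push_cast
  rfl

lemma intervalIntegral_rpow_mul_one_sub_rpow_eq_betaIntegral (u v : ℝ) :
    ((∫ x in (0 : ℝ)..1, x ^ (u - 1) * (1 - x) ^ (v - 1) : ℝ) : ℂ)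
      = Complex.betaIntegral u v := by
  rw [Complex.betaIntegral, ← intervalIntegral.integral_ofReal]
  refine intervalIntegral.integral_congr fun x hx => ?_
  rw [uIcc_of_le zero_le_one] at hx
  exact (ofReal_cpow_mul_one_sub_cpow hx u v).symm

section Beta

variable {u v : ℝ}

lemma integrableOn_rpow_mul_one_sub_rpow (hu : 0 < u) (hv : 0 < v) :
    IntegrableOn (fun x : ℝ => x ^ (u - 1) * (1 - x) ^ (v - 1)) (Ioo 0 1) := by
  have hc := Complex.betaIntegral_convergent (u := u) (v := v) (by simpa) (by simpa)
  rw [intervalIntegrable_iff_integrableOn_Ioc_of_le zero_le_one] at hc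
  refine (IntegrableOn.congr_fun hc.re (fun x hx => ?_) measurableSet_Ioc).mono_set
    Ioo_subset_Ioc_self
  rw [ofReal_cpow_mul_one_sub_cpow (Ioc_subset_Icc_self hx)]
  rfl

lemma integral_rpow_mul_one_sub_rpow (hu : 0 < u) (hv : 0 < v) :
    ∫ x in Ioo (0 : ℝ) 1, x ^ (u - 1) * (1 - x) ^ (v - 1) = ProbabilityTheory.beta u v := by
  rw [ProbabilityTheory.beta_eq_betaIntegralReal u v hu hv,
    ← intervalIntegral_rpow_mul_one_sub_rpow_eq_betaIntegral, Complex.ofReal_re,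
    intervalIntegral.integral_of_le zero_le_one, integral_Ioc_eq_integral_Ioo]

lemma abs_log_mul_rpow_le {x a s c : ℝ} (hx0 : 0 < x) (hx1 : x ≤ 1) (hc : 0 < c)
    (has : a ≤ s) : |log x| * x ^ s ≤ x ^ (a - c) / c := by
  calc |log x| * x ^ s ≤ |log x| * x ^ a :=
        mul_le_mul_of_nonneg_left (rpow_le_rpow_of_exponent_ge hx0 hx1 has) (abs_nonneg _)
    _ = |log x * x ^ c| * x ^ (a - c) := by
        rw [abs_mul, abs_of_pos (rpow_pos_of_pos hx0 c), mul_assoc, ← rpow_add hx0,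
          add_sub_cancel]
    _ ≤ 1 / c * x ^ (a - c) :=
        mul_le_mul_of_nonneg_right (abs_log_mul_self_rpow_lt x c hx0 hx1 hc).le
          (rpow_nonneg hx0.le _)
    _ = x ^ (a - c) / c := by ring

lemma hasDerivAt_integral_rpow_mul_one_sub_rpow (hu : 0 < u) (hv : 0 < v) :
    HasDerivAt (fun u => ∫ x in Ioo (0 : ℝ) 1, x ^ (u - 1) * (1 - x) ^ (v - 1))
      (∫ x in Ioo (0 : ℝ) 1, log x * (x ^ (u - 1) * (1 - x) ^ (v - 1))) u := by
  have hcont : ∀ w : ℝ, ContinuousOn (fun x : ℝ => x ^ (w - 1) * (1 - x) ^ (v - 1)) (Ioo 0 1) :=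
    fun w => (continuousOn_id.rpow_const fun x hx => Or.inl hx.1.ne').mul
      ((continuousOn_const.sub continuousOn_id).rpow_const
        fun x hx => Or.inl (sub_ne_zero.mpr hx.2.ne'))
  refine (hasDerivAt_integral_of_dominated_loc_of_deriv_le
    (F' := fun w x => log x * (x ^ (w - 1) * (1 - x) ^ (v - 1)))
    (bound := fun x => x ^ (u / 4 - 1) * (1 - x) ^ (v - 1) / (u / 4))
    (Metric.ball_mem_nhds u (half_pos hu))
    (.of_forall fun w => (hcont w).aestronglyMeasurable measurableSet_Ioo)
    (integrableOn_rpow_mul_one_sub_rpow hu hv)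
    (((continuousOn_log.mono fun x hx => hx.1.ne').mul (hcont u)).aestronglyMeasurable
      measurableSet_Ioo) ?_
    ((integrableOn_rpow_mul_one_sub_rpow (by linarith) hv).div_const _) ?_).2
  -- For `|w - u| < u / 2`, the factor `|log x|` costs only lowering the exponent to `u / 4 - 1`.
  · filter_upwards [ae_restrict_mem measurableSet_Ioo] with x hx w hw
    have hwu : u / 2 - 1 ≤ w - 1 := by
      have := (abs_sub_lt_iff.mp (Metric.mem_ball.mp hw)).2
      linarith
    have h1x : 0 ≤ (1 - x) ^ (v - 1) := rpow_nonneg (by linarith [hx.2]) _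
    calc ‖log x * (x ^ (w - 1) * (1 - x) ^ (v - 1))‖
        = |log x| * x ^ (w - 1) * (1 - x) ^ (v - 1) := by
          rw [norm_mul, norm_mul, Real.norm_eq_abs, Real.norm_eq_abs, Real.norm_eq_abs,
            abs_of_pos (rpow_pos_of_pos hx.1 _), abs_of_nonneg h1x, mul_assoc]
      _ ≤ x ^ (u / 2 - 1 - u / 4) / (u / 4) * (1 - x) ^ (v - 1) :=
          mul_le_mul_of_nonneg_right
            (abs_log_mul_rpow_le hx.1 hx.2.le (by linarith) hwu) h1x
      _ = x ^ (u / 4 - 1) * (1 - x) ^ (v - 1) / (u / 4) := by ring_nf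
  · filter_upwards [ae_restrict_mem measurableSet_Ioo] with x hx w _
    exact (((hasStrictDerivAt_const_rpow hx.1 (w - 1)).hasDerivAt.comp w
      ((hasDerivAt_id w).sub_const 1)).mul_const ((1 - x) ^ (v - 1))).congr_deriv (by ring)

lemma hasDerivAt_Gamma_of_pos {s : ℝ} (hs : 0 < s) : HasDerivAt Gamma (deriv Gamma s) s :=
  (differentiableAt_Gamma fun m => by linarith [(Nat.cast_nonneg m : (0 : ℝ) ≤ m)]).hasDerivAt

lemma hasDerivAt_beta_left (hu : 0 < u) (hv : 0 < v) :
    HasDerivAt (fun u => ProbabilityTheory.beta u v)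
      (ProbabilityTheory.beta u v *
        (deriv Gamma u / Gamma u - deriv Gamma (u + v) / Gamma (u + v))) u := by
  have huv : 0 < u + v := add_pos hu hv
  refine (((hasDerivAt_Gamma_of_pos hu).mul_const (Gamma v)).div
    ((hasDerivAt_Gamma_of_pos huv).comp_add_const u v) (Gamma_pos_of_pos huv).ne' :
      HasDerivAt (fun w => Gamma w * Gamma v / Gamma (w + v)) _ u).congr_deriv ?_
  rw [ProbabilityTheory.beta]
  field_simp [(Gamma_pos_of_pos hu).ne', (Gamma_pos_of_pos huv).ne']

lemma integral_log_mul_rpow_mul_one_sub_rpow (hu : 0 < u) (hv : 0 < v) :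
    ∫ x in Ioo (0 : ℝ) 1, log x * (x ^ (u - 1) * (1 - x) ^ (v - 1))
      = ProbabilityTheory.beta u v *
        (deriv Gamma u / Gamma u - deriv Gamma (u + v) / Gamma (u + v)) := by
  refine (hasDerivAt_integral_rpow_mul_one_sub_rpow hu hv).unique
    ((hasDerivAt_beta_left hu hv).congr_of_eventuallyEq ?_)
  filter_upwards [Ioi_mem_nhds hu] with w hw
  exact integral_rpow_mul_one_sub_rpow hw hv

end Beta

lemma image_inv_one_add_sq_Ioi : (fun r : ℝ => (1 + r ^ 2)⁻¹) '' Ioi 0 = Ioo 0 1 := by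
  refine Subset.antisymm ?_ fun y ⟨hy0, hy1⟩ => ⟨√(y⁻¹ - 1), ?_, ?_⟩
  · rintro _ ⟨r, hr, rfl⟩
    exact ⟨by positivity, inv_lt_one_of_one_lt₀ (by nlinarith [mem_Ioi.mp hr])⟩
  · have : 1 < y⁻¹ := (one_lt_inv₀ hy0).mpr hy1
    exact sqrt_pos.mpr (by linarith)
  · have : 1 < y⁻¹ := (one_lt_inv₀ hy0).mpr hy1
    show (1 + √(y⁻¹ - 1) ^ 2)⁻¹ = y
    rw [sq_sqrt (by linarith), add_sub_cancel, inv_inv]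

lemma strictAntiOn_inv_one_add_sq : StrictAntiOn (fun r : ℝ => (1 + r ^ 2)⁻¹) (Ioi 0) :=
  fun a ha b _ hab => inv_strictAnti₀ (by positivity) (by nlinarith [mem_Ioi.mp ha])

lemma integral_Ioo_zero_one_eq_integral_Ioi_inv_one_add_sq (g : ℝ → ℝ) :
    ∫ x in Ioo (0 : ℝ) 1, g x = ∫ r in Ioi (0 : ℝ), 2 * r / (1 + r ^ 2) ^ 2 * g (1 + r ^ 2)⁻¹ := by
  have hderiv : ∀ r ∈ Ioi (0 : ℝ), HasDerivWithinAt (fun r : ℝ => (1 + r ^ 2)⁻¹)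
      (-(2 * r) / (1 + r ^ 2) ^ 2) (Ioi 0) r := fun r _ =>
    (((hasDerivAt_pow 2 r).const_add 1).inv (by positivity)).hasDerivWithinAt.congr_deriv
      (by ring)
  rw [← image_inv_one_add_sq_Ioi, integral_image_eq_integral_abs_deriv_smul measurableSet_Ioi
    hderiv strictAntiOn_inv_one_add_sq.injOn]
  refine setIntegral_congr_fun measurableSet_Ioi fun r hr => ?_
  rw [abs_div, abs_neg, abs_of_pos (by linarith [mem_Ioi.mp hr]), abs_of_pos (by positivity),
    smul_eq_mul]

lemma jacobian_mul_rpow_inv_one_add_sq {r : ℝ} (hr : 0 < r) (u v : ℝ) :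
    2 * r / (1 + r ^ 2) ^ 2 * (((1 + r ^ 2)⁻¹) ^ (u - 1) * (1 - (1 + r ^ 2)⁻¹) ^ (v - 1))
      = 2 * (r ^ (2 * v - 1) * (1 + r ^ 2) ^ (-(u + v))) := by
  set P := 1 + r ^ 2
  have hP : 0 < P⁻¹ := by positivity
  have h1 : 1 - P⁻¹ = r ^ 2 * P⁻¹ := by
    rw [← div_eq_mul_inv, eq_div_iff (by positivity), sub_mul, inv_mul_cancel₀ (by positivity)]
    ring
  have hr2 : (r ^ 2) ^ (v - 1) * r = r ^ (2 * v - 1) := by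
    rw [← rpow_natCast, ← rpow_mul hr.le, ← rpow_add_one hr.ne']
    push_cast
    ring_nf
  have hP2 : P ^ (-(u + v)) = P⁻¹ ^ (u - 1) * P⁻¹ ^ (v - 1) * P⁻¹ ^ 2 := by
    rw [rpow_neg (by positivity), ← inv_rpow (by positivity), ← rpow_natCast, ← rpow_add hP,
      ← rpow_add hP]
    push_cast
    ring_nf
  rw [h1, mul_rpow (by positivity) hP.le, ← hr2, hP2]
  field_simp

lemma integral_rpow_mul_one_add_sq_rpow_mul_log {u v : ℝ} (hu : 0 < u) (hv : 0 < v) :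
    ∫ r in Ioi (0 : ℝ), r ^ (2 * v - 1) * (1 + r ^ 2) ^ (-(u + v)) * log (1 + r ^ 2)
      = -(ProbabilityTheory.beta u v / 2) *
        (deriv Gamma u / Gamma u - deriv Gamma (u + v) / Gamma (u + v)) := by
  have h := integral_log_mul_rpow_mul_one_sub_rpow hu hv
  rw [integral_Ioo_zero_one_eq_integral_Ioi_inv_one_add_sq] at h
  rw [← neg_div, div_mul_eq_mul_div, neg_mul, ← h, ← integral_neg, ← integral_div]
  refine setIntegral_congr_fun measurableSet_Ioi fun r hr => ?_
  rw [mul_left_comm, jacobian_mul_rpow_inv_one_add_sq hr, log_inv]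
  ring

lemma deriv_Gamma_div_Gamma_one_half :
    deriv Gamma (1 / 2) / Gamma (1 / 2) = -(eulerMascheroniConstant + 2 * log 2) := by
  rw [hasDerivAt_Gamma_one_half.deriv, Gamma_one_half_eq]
  field_simp

lemma integral_fun_norm_euclideanSpace (d : ℕ) [NeZero d] (f : ℝ → ℝ) :
    ∫ x : EuclideanSpace ℝ (Fin d), f ‖x‖
      = d * (√π ^ d / Gamma (d / 2 + 1)) * ∫ r in Ioi (0 : ℝ), r ^ (d - 1) * f r := by
  rw [integral_fun_norm_addHaar, finrank_euclideanSpace_fin, measureReal_def,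
    EuclideanSpace.volume_ball]
  simp only [Fintype.card_fin, ENNReal.ofReal_one, one_pow, one_mul, nsmul_eq_mul, smul_eq_mul]
  rw [ENNReal.toReal_ofReal (by positivity), mul_assoc]

/-- For the standard isotropic (circular) Cauchy density on `ℝ^d`,
`f(x) = Γ((d+1)/2) π^{-(d+1)/2} (1 + ‖x‖²)^{-(d+1)/2}`, one has
`E[ln(1 + ‖Z‖²)] = ln 4 + ψ((d+1)/2) + γ_e`, where `ψ = Γ'/Γ` is the digamma
function and `γ_e` is the Euler–Mascheroni constant. -/
theorem circular_cauchy_log_moment (d : ℕ) (hd : 1 ≤ d) :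
    (∫ x : EuclideanSpace ℝ (Fin d),
        Real.Gamma (((d : ℝ) + 1) / 2) * π ^ (-(((d : ℝ) + 1) / 2)) *
          (1 + ‖x‖ ^ 2) ^ (-(((d : ℝ) + 1) / 2)) * Real.log (1 + ‖x‖ ^ 2))
      = Real.log 4 + deriv Real.Gamma (((d : ℝ) + 1) / 2) / Real.Gamma (((d : ℝ) + 1) / 2)
        + Real.eulerMascheroniConstant := by
  have : NeZero d := ⟨by omega⟩
  set a : ℝ := ((d : ℝ) + 1) / 2
  have hv : 0 < (d : ℝ) / 2 := by positivity
  have hav : 1 / 2 + (d : ℝ) / 2 = a := by ring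
  have hJ := integral_rpow_mul_one_add_sq_rpow_mul_log one_half_pos hv
  rw [hav, deriv_Gamma_div_Gamma_one_half] at hJ
  have hπ : π ^ (-a) = (√π ^ d * √π)⁻¹ := by
    rw [rpow_neg pi_pos.le, ← pow_succ, sqrt_eq_rpow, ← rpow_natCast, ← rpow_mul pi_pos.le, ← hav]
    push_cast
    ring_nf
  have hlog4 : log 4 = 2 * log 2 := by
    rw [show (4 : ℝ) = 2 ^ 2 by norm_num, log_pow, Nat.cast_ofNat]
  rw [integral_fun_norm_euclideanSpace d fun t =>
      Gamma a * π ^ (-a) * (1 + t ^ 2) ^ (-a) * log (1 + t ^ 2),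
    setIntegral_congr_fun (g := fun r => Gamma a * π ^ (-a) *
      (r ^ (2 * ((d : ℝ) / 2) - 1) * (1 + r ^ 2) ^ (-a) * log (1 + r ^ 2))) measurableSet_Ioi
      fun r _ => by rw [← rpow_natCast, Nat.cast_sub hd]; ring_nf,
    integral_const_mul, hJ, ProbabilityTheory.beta, hav, Gamma_one_half_eq,
    Gamma_add_one hv.ne', hπ, hlog4]
  have hΓa : Gamma a ≠ 0 := (Gamma_pos_of_pos (by positivity)).ne'
  field_simp
  ring
end

section
/- Let g : ℝ → ℝ be continuous, even, and strictly increasing on [0, ∞); let a < b be reals; and let f : ℝ → ℝ be a nonnegative integrable function that is strictly positive on the open interval (a, b). For r ∈ [a, b] define J(r) = ∫_a^r g(x − a) f(x) dx + ∫_r^b g(x − b) f(x) dx. Then J attains its minimum over [a, b] uniquely at the midpoint r = (a + b)/2; i.e., J(r) > J((a+b)/2) for every r ∈ [a, b] with r ≠ (a+b)/2. -/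
/-!
Moving the boundary from the midpoint `m` to `r` changes the cost by
`∫ x in m..r, (g (x - a) - g (x - b)) * f x`. Since `g` is even and increasing in `|x|`, the
integrand has the sign of `x - m`: points to the right of `m` are closer to `b` than to `a`.
Hence the change is positive whenever `r ≠ m` and `f > 0` between `m` and `r`.
-/

open MeasureTheory intervalIntegral

theorem StrictMonoOn.apply_lt_apply_of_abs_lt {g : ℝ → ℝ} (hgm : StrictMonoOn g (Set.Ici 0))
    (hge : ∀ x, g (-x) = g x) {x y : ℝ} (h : |x| < |y|) : g x < g y := by
  have habs (z : ℝ) : g |z| = g z := by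
    rcases abs_choice z with hz | hz <;> simp [hz, hge]
  rw [← habs x, ← habs y]
  exact hgm (abs_nonneg x) (abs_nonneg y) h

theorem abs_sub_lt_abs_sub_of_midpoint_lt {a b x : ℝ} (hab : a < b) (hx : (a + b) / 2 < x) :
    |x - b| < |x - a| := by
  rw [← sq_lt_sq]
  nlinarith

theorem abs_sub_lt_abs_sub_of_lt_midpoint {a b x : ℝ} (hab : a < b) (hx : x < (a + b) / 2) :
    |x - a| < |x - b| := by
  rw [← sq_lt_sq]
  nlinarith

theorem integral_add_integral_eq_add_integral_sub {μ : Measure ℝ} {φ ψ : ℝ → ℝ}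
    (hφ : ∀ u v, IntervalIntegrable φ μ u v) (hψ : ∀ u v, IntervalIntegrable ψ μ u v)
    (a b m r : ℝ) :
    (∫ x in a..r, φ x ∂μ) + ∫ x in r..b, ψ x ∂μ =
      (∫ x in a..m, φ x ∂μ) + (∫ x in m..b, ψ x ∂μ) + ∫ x in m..r, (φ x - ψ x) ∂μ := by
  rw [integral_sub (hφ m r) (hψ m r), ← integral_add_adjacent_intervals (hφ a m) (hφ m r),
    ← integral_add_adjacent_intervals (hψ m r) (hψ r b)]
  ring

theorem intervalIntegral_pos_of_sign_change {h : ℝ → ℝ} {m r : ℝ}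
    (hint : IntervalIntegrable h volume m r) (hne : m ≠ r)
    (hpos : ∀ x ∈ Set.Ioo m r, 0 < h x) (hneg : ∀ x ∈ Set.Ioo r m, h x < 0) :
    0 < ∫ x in m..r, h x := by
  rcases hne.lt_or_gt with hmr | hrm
  · exact intervalIntegral_pos_of_pos_on hint hpos hmr
  · rw [integral_symm, neg_pos, ← neg_pos, ← intervalIntegral.integral_neg]
    exact intervalIntegral_pos_of_pos_on hint.symm.neg (fun x hx => neg_pos.2 (hneg x hx)) hrm

theorem midpoint_rule_optimal_general (g : ℝ → ℝ) (hgc : Continuous g)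
    (hge : ∀ x : ℝ, g (-x) = g x) (hgm : StrictMonoOn g (Set.Ici 0))
    (a b : ℝ) (hab : a < b) (f : ℝ → ℝ)
    (hfi : Integrable f volume) (hfpos : ∀ x ∈ Set.Ioo a b, 0 < f x) :
    ∀ r ∈ Set.Icc a b, r ≠ (a + b) / 2 →
      (∫ x in a..((a + b) / 2), g (x - a) * f x) +
          (∫ x in ((a + b) / 2)..b, g (x - b) * f x)
        < (∫ x in a..r, g (x - a) * f x) + (∫ x in r..b, g (x - b) * f x) := by
  intro r hr hrm
  have hint (c u v : ℝ) : IntervalIntegrable (fun x => g (x - c) * f x) volume u v :=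
    hfi.intervalIntegrable.continuousOn_mul (hgc.comp (continuous_sub_right c)).continuousOn
  rw [integral_add_integral_eq_add_integral_sub (hint a) (hint b) a b ((a + b) / 2) r,
    lt_add_iff_pos_right]
  apply intervalIntegral_pos_of_sign_change ((hint a _ _).sub (hint b _ _)) hrm.symm
    <;> intro x hx <;> rw [← sub_mul]
  · exact mul_pos
      (sub_pos.2 (hgm.apply_lt_apply_of_abs_lt hge (abs_sub_lt_abs_sub_of_midpoint_lt hab hx.1)))
      (hfpos x ⟨by linarith [hx.1], hx.2.trans_le hr.2⟩)
  · exact mul_neg_of_neg_of_pos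
      (sub_neg.2 (hgm.apply_lt_apply_of_abs_lt hge (abs_sub_lt_abs_sub_of_lt_midpoint hab hx.2)))
      (hfpos x ⟨hr.1.trans_lt hx.1, by linarith [hx.2]⟩)

/-- Midpoint rule optimality: let `g` be continuous, even, and strictly increasing on
`[0, ∞)`, and let `f ≥ 0` be integrable and strictly positive on `(a, b)`.
Then `J(r) = ∫_a^r g(x - a) f(x) dx + ∫_r^b g(x - b) f(x) dx` attains its minimum on
`[a, b]` uniquely at the midpoint `r = (a + b)/2`. -/
theorem midpoint_rule_optimal (g : ℝ → ℝ) (hgc : Continuous g)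
    (hge : ∀ x : ℝ, g (-x) = g x) (hgm : StrictMonoOn g (Set.Ici 0))
    (a b : ℝ) (hab : a < b) (f : ℝ → ℝ) (hf0 : ∀ x, 0 ≤ f x)
    (hfi : Integrable f volume) (hfpos : ∀ x ∈ Set.Ioo a b, 0 < f x) :
    ∀ r ∈ Set.Icc a b, r ≠ (a + b) / 2 →
      (∫ x in a..((a + b) / 2), g (x - a) * f x) +
          (∫ x in ((a + b) / 2)..b, g (x - b) * f x)
        < (∫ x in a..r, g (x - a) * f x) + (∫ x in r..b, g (x - b) * f x) :=
  midpoint_rule_optimal_general g hgc hge hgm a b hab f hfi hfpos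
end

section
/- Let X be a real random variable possessing a probability density. For Δ > 0 let X̂_Δ = Δ·k when X ∈ (kΔ − Δ/2, kΔ + Δ/2] (k ∈ ℤ), i.e., X̂_Δ is the nearest integer multiple of Δ to X, and let q_Δ = X − X̂_Δ be the quantization error. Then E[q_Δ²]/Δ² → 1/12 as Δ → 0⁺. -/
/-! Since `X - X̂_Δ = Δ e(X/Δ)` for the 1-periodic rounding error `e`, the normalized error is
`∫ f(x) e(x/Δ)² dx` with `f` the density of `X`. For integrable `f` and bounded 1-periodic `g`,
`∫ f(x) g(x/Δ) dx → (∫ f) (∫₀¹ g)`: once the mean of `g` is subtracted, a cell `[c, c + Δ]`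
contributes only through the oscillation of `f` on it, which is uniformly small when `f` is
continuous with compact support, and such functions are dense in `L¹`. Finally
`∫₀¹ e² = ∫_{-1/2}^{1/2} y² dy = 1/12`. -/

open MeasureTheory Filter Set Function Topology

noncomputable def roundingError (y : ℝ) : ℝ := y - ⌈y - 1 / 2⌉

lemma roundingError_periodic : Periodic roundingError 1 := by
  intro y
  simp only [roundingError, show y + 1 - 1 / 2 = y - 1 / 2 + 1 by ring, Int.ceil_add_one]
  push_cast
  ring

lemma roundingError_eq_self {y : ℝ} (hy : y ∈ Ioc (-1 / 2) (1 / 2)) : roundingError y = y := by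
  have : ⌈y - 1 / 2⌉ = 0 := by
    rw [Int.ceil_eq_zero_iff]
    constructor <;> linarith [hy.1, hy.2]
  rw [roundingError, this, Int.cast_zero, sub_zero]

lemma abs_roundingError_le (y : ℝ) : |roundingError y| ≤ 1 / 2 := by
  have h₁ := Int.le_ceil (y - 1 / 2)
  have h₂ := Int.ceil_lt_add_one (y - 1 / 2)
  rw [abs_le, roundingError]
  constructor <;> linarith

lemma abs_roundingError_sq_le (y : ℝ) : |roundingError y ^ 2| ≤ 1 / 4 := by
  rw [abs_pow, show (1 / 4 : ℝ) = (1 / 2) ^ 2 by norm_num]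
  exact pow_le_pow_left₀ (abs_nonneg _) (abs_roundingError_le y) 2

lemma measurable_roundingError : Measurable roundingError :=
  measurable_id.sub (measurable_from_top.comp (measurable_id.sub_const _).ceil)

lemma integral_roundingError_sq : ∫ y in (0 : ℝ)..1, roundingError y ^ 2 = 1 / 12 := by
  have hshift := (roundingError_periodic.comp (· ^ 2)).intervalIntegral_add_eq (-1 / 2) 0
  have hcentral :
      ∫ y in (-1 / 2 : ℝ)..1 / 2, roundingError y ^ 2 = ∫ y in (-1 / 2 : ℝ)..1 / 2, y ^ 2 :=
    intervalIntegral.integral_congr_ae (ae_of_all _ fun y hy => by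
      rw [uIoc_of_le (by norm_num)] at hy
      rw [roundingError_eq_self hy])
  norm_num [comp_def] at hshift hcentral
  rw [← hshift, hcentral]

section PeriodicAveraging

variable {g : ℝ → ℝ} {C : ℝ}

lemma intervalIntegrable_of_abs_le (hgm : Measurable g) (hC : ∀ y, |g y| ≤ C) (u v : ℝ) :
    IntervalIntegrable g volume u v :=
  intervalIntegrable_const.mono_fun' hgm.aestronglyMeasurable (ae_of_all _ hC)

lemma intervalIntegrable_comp_div (hgm : Measurable g) (hC : ∀ y, |g y| ≤ C) (Δ u v : ℝ) :
    IntervalIntegrable (fun x => g (x / Δ)) volume u v :=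
  intervalIntegrable_of_abs_le (hgm.comp (measurable_id.div_const Δ)) (fun x => hC (x / Δ)) u v

lemma integrable_mul_comp_div (hgm : Measurable g) (hC : ∀ y, |g y| ≤ C) {f : ℝ → ℝ}
    (hf : Integrable f) (Δ : ℝ) : Integrable fun x => f x * g (x / Δ) :=
  hf.mul_bdd (hgm.comp (measurable_id.div_const Δ)).aestronglyMeasurable
    (ae_of_all _ fun x => hC (x / Δ))

lemma intervalIntegral_comp_div_eq_zero (hg : Periodic g 1) (hg₀ : ∫ y in (0 : ℝ)..1, g y = 0)
    {Δ : ℝ} (hΔ : 0 < Δ) (c : ℝ) : ∫ x in c..c + Δ, g (x / Δ) = 0 := by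
  rw [intervalIntegral.integral_comp_div _ hΔ.ne', add_div, div_self hΔ.ne',
    hg.intervalIntegral_add_eq _ 0, zero_add, hg₀, smul_zero]

lemma abs_intervalIntegral_mul_comp_div_le (hgm : Measurable g) (hC : ∀ y, |g y| ≤ C)
    (hg : Periodic g 1) (hg₀ : ∫ y in (0 : ℝ)..1, g y = 0) {φ : ℝ → ℝ} (hφ : Continuous φ)
    {Δ η : ℝ} (hΔ : 0 < Δ) (c : ℝ) (hη : ∀ x ∈ Icc c (c + Δ), |φ x - φ c| ≤ η) :
    |∫ x in c..c + Δ, φ x * g (x / Δ)| ≤ η * C * Δ := by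
  have hgΔ := intervalIntegrable_comp_div hgm hC Δ c (c + Δ)
  have hcentered :
      ∫ x in c..c + Δ, φ x * g (x / Δ) = ∫ x in c..c + Δ, (φ x - φ c) * g (x / Δ) := by
    simp only [sub_mul]
    rw [intervalIntegral.integral_sub (hgΔ.continuousOn_mul hφ.continuousOn)
      (hgΔ.const_mul _), intervalIntegral.integral_const_mul,
      intervalIntegral_comp_div_eq_zero hg hg₀ hΔ, mul_zero, sub_zero]
  have hbound : ∀ x ∈ uIoc c (c + Δ), ‖(φ x - φ c) * g (x / Δ)‖ ≤ η * C := fun x hx => by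
    rw [uIoc_of_le (by linarith)] at hx
    rw [norm_mul, Real.norm_eq_abs, Real.norm_eq_abs]
    exact mul_le_mul (hη x (Ioc_subset_Icc_self hx)) (hC _) (abs_nonneg _)
      ((abs_nonneg _).trans (hη x (Ioc_subset_Icc_self hx)))
  have := intervalIntegral.norm_integral_le_of_norm_le_const hbound
  rwa [add_sub_cancel_left, abs_of_pos hΔ, ← hcentered] at this

lemma abs_integral_mul_comp_div_le (hgm : Measurable g) (hC : ∀ y, |g y| ≤ C)
    (hg : Periodic g 1) (hg₀ : ∫ y in (0 : ℝ)..1, g y = 0) {φ : ℝ → ℝ} (hφ : Continuous φ)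
    {a b : ℝ} (hab : a ≤ b) (hsupp : support φ ⊆ Ioc a b) {Δ η : ℝ} (hΔ : 0 < Δ)
    (hη : ∀ x y, |x - y| ≤ Δ → |φ x - φ y| ≤ η) :
    |∫ x, φ x * g (x / Δ)| ≤ η * C * (b - a + Δ) := by
  set N := ⌈(b - a) / Δ⌉₊
  set t : ℕ → ℝ := fun k => a + k * Δ
  have ht : ∀ k, t (k + 1) = t k + Δ := fun k => by simp only [t]; push_cast; ring
  have hbN : b ≤ t N := by
    have := (div_le_iff₀ hΔ).1 (Nat.le_ceil ((b - a) / Δ))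
    simp only [t]; linarith
  have hNΔ : N * Δ ≤ b - a + Δ := by
    have := Nat.ceil_lt_add_one (div_nonneg (sub_nonneg.2 hab) hΔ.le)
    rw [← le_div_iff₀ hΔ, add_div, div_self hΔ.ne']
    exact this.le
  have hgΔ : ∀ u v, IntervalIntegrable (fun x => φ x * g (x / Δ)) volume u v := fun u v =>
    (intervalIntegrable_comp_div hgm hC Δ u v).continuousOn_mul hφ.continuousOn
  have hpartition : ∫ x, φ x * g (x / Δ)
      = ∑ k ∈ Finset.range N, ∫ x in t k..t (k + 1), φ x * g (x / Δ) := by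
    rw [intervalIntegral.sum_integral_adjacent_intervals fun k _ => hgΔ _ _,
      intervalIntegral.integral_eq_integral_of_support_subset]
    refine (support_mul_subset_left _ _).trans (hsupp.trans (Ioc_subset_Ioc ?_ hbN))
    simp [t]
  have hcell : ∀ k, |∫ x in t k..t (k + 1), φ x * g (x / Δ)| ≤ η * C * Δ := fun k => by
    rw [ht]
    refine abs_intervalIntegral_mul_comp_div_le hgm hC hg hg₀ hφ hΔ _ fun x hx => hη _ _ ?_
    rw [abs_of_nonneg (by linarith [hx.1])]
    linarith [hx.2]
  have hηC : 0 ≤ η * C :=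
    mul_nonneg ((abs_nonneg _).trans (hη 0 0 (by simpa using hΔ.le))) ((abs_nonneg _).trans (hC 0))
  calc |∫ x, φ x * g (x / Δ)|
      ≤ ∑ k ∈ Finset.range N, |∫ x in t k..t (k + 1), φ x * g (x / Δ)| := by
        rw [hpartition]; exact Finset.abs_sum_le_sum_abs _ _
    _ ≤ ∑ k ∈ Finset.range N, η * C * Δ := Finset.sum_le_sum fun k _ => hcell k
    _ = η * C * (N * Δ) := by rw [Finset.sum_const, Finset.card_range, nsmul_eq_mul]; ring
    _ ≤ η * C * (b - a + Δ) := mul_le_mul_of_nonneg_left hNΔ hηC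

theorem tendsto_integral_mul_comp_div_of_hasCompactSupport (hgm : Measurable g)
    (hC : ∀ y, |g y| ≤ C) (hg : Periodic g 1) (hg₀ : ∫ y in (0 : ℝ)..1, g y = 0) {φ : ℝ → ℝ}
    (hφ : Continuous φ) (hφs : HasCompactSupport φ) :
    Tendsto (fun Δ => ∫ x, φ x * g (x / Δ)) (𝓝[>] 0) (𝓝 0) := by
  obtain ⟨r, hr, hrφ⟩ := hφs.isBounded.subset_closedBall_lt 0 0
  have hsupp : support φ ⊆ Ioc (-r - 1) r := fun x hx => by
    have := abs_le.1 (by simpa using hrφ (subset_tsupport φ hx))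
    exact ⟨by linarith [this.1], this.2⟩
  have hC₀ : 0 ≤ C := (abs_nonneg _).trans (hC 0)
  rw [Metric.tendsto_nhds]
  intro ε hε
  set L := 2 * r + 2
  set η := ε / (C * L + 1)
  obtain ⟨δ, hδ, hδφ⟩ := Metric.uniformContinuous_iff.1
    (hφ.uniformContinuous_of_tendsto_cocompact hφs.is_zero_at_infty) η (by positivity)
  filter_upwards [Ioo_mem_nhdsGT (lt_min hδ one_pos)] with Δ hΔ
  have hΔδ : Δ < δ := hΔ.2.trans_le (min_le_left _ _)
  have hΔ₁ : Δ ≤ 1 := (hΔ.2.trans_le (min_le_right _ _)).le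
  have hbound := abs_integral_mul_comp_div_le hgm hC hg hg₀ hφ (by linarith) hsupp hΔ.1
    (η := η) fun x y hxy => (hδφ (lt_of_le_of_lt hxy hΔδ)).le
  rw [Real.dist_eq, sub_zero]
  calc |∫ x, φ x * g (x / Δ)| ≤ η * C * (r - (-r - 1) + Δ) := hbound
    _ ≤ η * (C * L) := by rw [mul_assoc]; gcongr; linarith
    _ < η * (C * L + 1) := by gcongr; linarith
    _ = ε := div_mul_cancel₀ _ (by positivity)

theorem tendsto_integral_mul_comp_div_of_integral_eq_zero (hgm : Measurable g)
    (hC : ∀ y, |g y| ≤ C) (hg : Periodic g 1) (hg₀ : ∫ y in (0 : ℝ)..1, g y = 0) {f : ℝ → ℝ}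
    (hf : Integrable f) :
    Tendsto (fun Δ => ∫ x, f x * g (x / Δ)) (𝓝[>] 0) (𝓝 0) := by
  have hC₀ : 0 ≤ C := (abs_nonneg _).trans (hC 0)
  rw [Metric.tendsto_nhds]
  intro ε hε
  obtain ⟨φ, hφs, hfφ, hφ, hφi⟩ :=
    hf.exists_hasCompactSupport_integral_sub_le (ε := ε / (2 * (C + 1))) (by positivity)
  have hφlim := tendsto_integral_mul_comp_div_of_hasCompactSupport hgm hC hg hg₀ hφ hφs
  filter_upwards [Metric.tendsto_nhds.1 hφlim (ε / 2) (half_pos hε)] with Δ hΔ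
  rw [Real.dist_eq, sub_zero] at hΔ ⊢
  have happrox : |(∫ x, f x * g (x / Δ)) - ∫ x, φ x * g (x / Δ)| ≤ ε / 2 := by
    rw [← integral_sub (integrable_mul_comp_div hgm hC hf Δ)
      (integrable_mul_comp_div hgm hC hφi Δ), ← Real.norm_eq_abs]
    calc ‖∫ x, (f x * g (x / Δ) - φ x * g (x / Δ))‖
        ≤ ∫ x, ‖f x - φ x‖ * C :=
          norm_integral_le_of_norm_le ((hf.sub hφi).norm.mul_const C) (ae_of_all _ fun x => by
            rw [← sub_mul, norm_mul]; exact mul_le_mul_of_nonneg_left (hC _) (norm_nonneg _))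
      _ = (∫ x, ‖f x - φ x‖) * C := integral_mul_const _ _
      _ ≤ ε / (2 * (C + 1)) * (C + 1) := by gcongr; linarith
      _ = ε / 2 := by field_simp
  linarith [abs_sub_abs_le_abs_sub (∫ x, f x * g (x / Δ)) (∫ x, φ x * g (x / Δ))]

theorem tendsto_integral_mul_comp_div (hgm : Measurable g) (hC : ∀ y, |g y| ≤ C)
    (hg : Periodic g 1) {f : ℝ → ℝ} (hf : Integrable f) :
    Tendsto (fun Δ => ∫ x, f x * g (x / Δ)) (𝓝[>] 0)
      (𝓝 ((∫ x, f x) * ∫ y in (0 : ℝ)..1, g y)) := by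
  set m := ∫ y in (0 : ℝ)..1, g y
  have hcentered : ∫ y in (0 : ℝ)..1, (g y - m) = 0 := by
    rw [intervalIntegral.integral_sub (intervalIntegrable_of_abs_le hgm hC 0 1)
      intervalIntegrable_const]
    simp [m]
  have hlim := tendsto_integral_mul_comp_div_of_integral_eq_zero (C := C + |m|) (hgm.sub_const m)
    (fun y => (abs_sub _ _).trans (by linarith [hC y])) (fun y => by simp only [hg y])
    hcentered hf
  have hsplit : ∀ Δ, (∫ x, f x * (g (x / Δ) - m)) + (∫ x, f x) * m = ∫ x, f x * g (x / Δ) :=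
    fun Δ => by
      simp only [mul_sub]
      rw [integral_sub (integrable_mul_comp_div hgm hC hf Δ) (hf.mul_const m), integral_mul_const,
        sub_add_cancel]
  simpa only [zero_add] using (hlim.add_const ((∫ x, f x) * m)).congr hsplit

end PeriodicAveraging

section ProbabilityDensity

variable {Ω E : Type*} [MeasurableSpace Ω] [MeasurableSpace E] {ℙ : Measure Ω} {μ : Measure E}
  {X : Ω → E}

lemma integrable_toReal_pdf [IsFiniteMeasure ℙ] [HasPDF X ℙ μ] :
    Integrable (fun x => (pdf X ℙ μ x).toReal) μ := by
  simpa using (pdf.integrable_pdf_smul_iff (f := fun _ => (1 : ℝ)) aestronglyMeasurable_const).2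
    (integrable_const (μ := ℙ) 1)

lemma integral_toReal_pdf [IsProbabilityMeasure ℙ] [HasPDF X ℙ μ] :
    ∫ x, (pdf X ℙ μ x).toReal ∂μ = 1 := by
  simpa using pdf.integral_pdf_smul (X := X) (ℙ := ℙ) (f := fun _ => (1 : ℝ))
    aestronglyMeasurable_const

end ProbabilityDensity

theorem uniform_quantizer_mse_general {Ω : Type*} [MeasurableSpace Ω] (P : Measure Ω)
    [IsProbabilityMeasure P] (X : Ω → ℝ)
    (hpdf : HasPDF X P volume) :
    Tendsto (fun Δ : ℝ =>
        (∫ ω, (X ω - Δ * (⌈X ω / Δ - 1 / 2⌉ : ℤ)) ^ 2 ∂P) / Δ ^ 2)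
      (nhdsWithin 0 (Set.Ioi 0)) (nhds (1 / 12)) := by
  have hmse : ∀ Δ ≠ 0, ∫ x, (pdf X P volume x).toReal * roundingError (x / Δ) ^ 2
      = (∫ ω, (X ω - Δ * (⌈X ω / Δ - 1 / 2⌉ : ℤ)) ^ 2 ∂P) / Δ ^ 2 := fun Δ hΔ => by
    have hscale : ∀ x, (x - Δ * ⌈x / Δ - 1 / 2⌉) ^ 2 / Δ ^ 2 = roundingError (x / Δ) ^ 2 :=
      fun x => by rw [roundingError]; field_simp
    simp only [← integral_div, hscale]
    exact pdf.integral_pdf_smul ((measurable_roundingError.pow_const 2).comp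
      (measurable_id.div_const Δ)).aestronglyMeasurable
  have hlim := tendsto_integral_mul_comp_div (measurable_roundingError.pow_const 2)
    abs_roundingError_sq_le (roundingError_periodic.comp (· ^ 2))
    (integrable_toReal_pdf (X := X) (ℙ := P))
  rw [integral_toReal_pdf, integral_roundingError_sq, one_mul] at hlim
  exact hlim.congr' (eventually_nhdsWithin_of_forall fun Δ hΔ => hmse Δ (ne_of_gt hΔ))

/-- High-rate performance of the uniform scalar quantizer under the mean squared
error: if `X` has a density and `X̂_Δ` is the nearest multiple of `Δ` (with
`X ∈ (kΔ - Δ/2, kΔ + Δ/2]` mapped to `kΔ`, i.e. `X̂_Δ = Δ⌈X/Δ - 1/2⌉`), then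
`E[(X - X̂_Δ)²]/Δ² → 1/12` as `Δ → 0⁺`. -/
theorem uniform_quantizer_mse {Ω : Type*} [MeasurableSpace Ω] (P : Measure Ω)
    [IsProbabilityMeasure P] (X : Ω → ℝ) (hX : Measurable X)
    (hpdf : HasPDF X P volume) :
    Tendsto (fun Δ : ℝ =>
        (∫ ω, (X ω - Δ * (⌈X ω / Δ - 1 / 2⌉ : ℤ)) ^ 2 ∂P) / Δ ^ 2)
      (nhdsWithin 0 (Set.Ioi 0)) (nhds (1 / 12)) :=
  uniform_quantizer_mse_general P X hpdf
end
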